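/- arXiv:1602.07666 — 9 statements merged into one kernel-verified Lean document; each statement's English description precedes it below -/
import Mathlib

section
/- Two random elements ξ and η in the extended nonnegative orthant [0,∞]^n are equal in distribution if and only if ⟨u, ξ⟩ and ⟨u, η⟩ are equal in distribution for all u in the nonnegative orthant ℝ₊^n (where the inner product is extended to [0,∞]^n in the canonical way). -/
open MeasureTheory
open scoped ENNReal NNReal

/-- Extended "negative exponential" `t ↦ e^{-t}` on `[0,∞]`, with `e^{-∞} = 0`. -/
noncomputable def expNeg (t : ℝ≥0∞) : ℝ := (EReal.exp (-(t : EReal))).toReal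

lemma expNeg_exp_le_one (t : ℝ≥0∞) : EReal.exp (-(t : EReal)) ≤ 1 :=
  EReal.exp_le_one_iff.mpr (by
    rw [show (0 : EReal) = -0 by simp, EReal.neg_le_neg_iff]
    exact EReal.coe_ennreal_nonneg t)

lemma expNeg_exp_ne_top (t : ℝ≥0∞) : EReal.exp (-(t : EReal)) ≠ ⊤ :=
  (lt_of_le_of_lt (expNeg_exp_le_one t) ENNReal.one_lt_top).ne

lemma expNeg_coe (t : ℝ≥0) : expNeg (t : ℝ≥0∞) = Real.exp (-(t : ℝ)) := by
  rw [expNeg, EReal.coe_nnreal_eq_coe_real, ← EReal.coe_neg, EReal.exp_coe,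
    ENNReal.toReal_ofReal (Real.exp_nonneg _)]

lemma expNeg_top : expNeg ∞ = 0 := by
  simp [expNeg]

lemma expNeg_pos (t : ℝ≥0) : 0 < expNeg (t : ℝ≥0∞) := by
  rw [expNeg_coe]; exact Real.exp_pos _

lemma expNeg_zero : expNeg 0 = 1 := by
  simpa using expNeg_coe 0

lemma expNeg_injective : Function.Injective expNeg := by
  intro a b h
  rcases eq_or_ne a ⊤ with ha | ha
  · rcases eq_or_ne b ⊤ with hb | hb
    · rw [ha, hb]
    · exfalso
      lift b to ℝ≥0 using hb
      rw [ha, expNeg_top] at h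
      exact absurd h.symm (ne_of_gt (expNeg_pos b))
  · rcases eq_or_ne b ⊤ with hb | hb
    · exfalso
      lift a to ℝ≥0 using ha
      rw [hb, expNeg_top] at h
      exact absurd h (ne_of_gt (expNeg_pos a))
    · lift a to ℝ≥0 using ha
      lift b to ℝ≥0 using hb
      rw [expNeg_coe, expNeg_coe] at h
      have := Real.exp_injective h
      have : (a : ℝ) = (b : ℝ) := by linarith
      exact_mod_cast this

lemma expNeg_add (a b : ℝ≥0∞) : expNeg (a + b) = expNeg a * expNeg b := by
  rcases eq_or_ne a ⊤ with ha | ha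
  · simp [ha, expNeg_top]
  rcases eq_or_ne b ⊤ with hb | hb
  · simp [hb, expNeg_top]
  lift a to ℝ≥0 using ha
  lift b to ℝ≥0 using hb
  rw [← ENNReal.coe_add, expNeg_coe, expNeg_coe, expNeg_coe, ← Real.exp_add]
  congr 1
  push_cast
  ring

lemma continuous_expNeg : Continuous expNeg :=
  ENNReal.continuousOn_toReal.comp_continuous
    (ENNReal.continuous_exp.comp (continuous_coe_ennreal_ereal.neg))
    (fun t => expNeg_exp_ne_top t)

/-- The extended linear functional `x ↦ ∑ⱼ uⱼ xⱼ` on `[0,∞]^n`. -/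
noncomputable def linC {n : ℕ} (u : Fin n → ℝ≥0) (x : Fin n → ℝ≥0∞) : ℝ≥0∞ :=
  ∑ j, (u j : ℝ≥0∞) * x j

lemma measurable_linC {n : ℕ} (u : Fin n → ℝ≥0) : Measurable (linC u) :=
  Finset.measurable_sum _ fun j _ => (measurable_pi_apply j).const_mul _

lemma continuous_linC {n : ℕ} (u : Fin n → ℝ≥0) : Continuous (linC u) := by
  unfold linC
  exact continuous_finset_sum _ fun j _ =>
    (ENNReal.continuous_const_mul (by simp)).comp (continuous_apply j)

lemma linC_single {n : ℕ} (j : Fin n) (x : Fin n → ℝ≥0∞) :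
    linC (Pi.single j 1) x = x j := by
  unfold linC
  rw [Finset.sum_eq_single j]
  · simp
  · intro k _ hk
    simp [Pi.single_eq_of_ne hk]
  · simp

/-- `x ↦ e^{-⟨u,x⟩}` as a continuous map on `[0,∞]^n`. -/
noncomputable def gCW {n : ℕ} (u : Fin n → ℝ≥0) : C((Fin n → ℝ≥0∞), ℝ) :=
  ⟨fun x => expNeg (linC u x), continuous_expNeg.comp (continuous_linC u)⟩

lemma gCW_apply {n : ℕ} (u : Fin n → ℝ≥0) (x : Fin n → ℝ≥0∞) :
    gCW u x = expNeg (linC u x) := rfl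

lemma gCW_mul {n : ℕ} (u v : Fin n → ℝ≥0) : gCW u * gCW v = gCW (u + v) := by
  ext x
  rw [ContinuousMap.mul_apply, gCW_apply, gCW_apply, gCW_apply, ← expNeg_add]
  congr 1
  unfold linC
  rw [← Finset.sum_add_distrib]
  refine Finset.sum_congr rfl fun j _ => ?_
  rw [Pi.add_apply, ENNReal.coe_add, add_mul]

lemma gCW_one {n : ℕ} : gCW (0 : Fin n → ℝ≥0) = 1 := by
  ext x
  simp [gCW_apply, linC, expNeg_zero]

lemma mem_range_gCW_of_mem_closure {n : ℕ} (f : C((Fin n → ℝ≥0∞), ℝ))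
    (hf : f ∈ Submonoid.closure (Set.range (@gCW n))) : f ∈ Set.range (@gCW n) := by
  induction hf using Submonoid.closure_induction with
  | mem x hx => exact hx
  | one => exact ⟨0, gCW_one⟩
  | mul x y hx hy ihx ihy =>
      obtain ⟨u, rfl⟩ := ihx
      obtain ⟨v, rfl⟩ := ihy
      exact ⟨u + v, (gCW_mul u v).symm⟩

lemma integrable_continuousMap {n : ℕ} (f : C((Fin n → ℝ≥0∞), ℝ))
    (κ : Measure (Fin n → ℝ≥0∞)) [IsFiniteMeasure κ] : Integrable f κ :=
  (BoundedContinuousFunction.mkOfCompact f).integrable κ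

lemma integral_eq_on_adjoin {n : ℕ} {μ ν : Measure (Fin n → ℝ≥0∞)}
    [IsFiniteMeasure μ] [IsFiniteMeasure ν]
    (h : ∀ u : Fin n → ℝ≥0, ∫ x, gCW u x ∂μ = ∫ x, gCW u x ∂ν)
    (f : C((Fin n → ℝ≥0∞), ℝ)) (hf : f ∈ Algebra.adjoin ℝ (Set.range (@gCW n))) :
    ∫ x, f x ∂μ = ∫ x, f x ∂ν := by
  have hf' : f ∈ Submodule.span ℝ
      ((Submonoid.closure (Set.range (@gCW n)) : Submonoid C((Fin n → ℝ≥0∞), ℝ)) :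
        Set C((Fin n → ℝ≥0∞), ℝ)) := by
    have := Algebra.adjoin_eq_span ℝ (Set.range (@gCW n))
    rw [← Subalgebra.mem_toSubmodule, this] at hf
    exact hf
  clear hf
  induction hf' using Submodule.span_induction with
  | mem g hg =>
      obtain ⟨u, rfl⟩ := mem_range_gCW_of_mem_closure g hg
      exact h u
  | zero => simp
  | add g₁ g₂ hg₁ hg₂ ih₁ ih₂ =>
      have e1 : ∀ (κ : Measure (Fin n → ℝ≥0∞)) [IsFiniteMeasure κ],
          ∫ x, (g₁ + g₂) x ∂κ = ∫ x, g₁ x ∂κ + ∫ x, g₂ x ∂κ := by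
        intro κ _
        simp_rw [ContinuousMap.add_apply]
        exact integral_add (integrable_continuousMap g₁ κ) (integrable_continuousMap g₂ κ)
      rw [e1 μ, e1 ν, ih₁, ih₂]
  | smul c g hg ih =>
      simp_rw [ContinuousMap.smul_apply, integral_smul, ih]

/-- Cramér–Wold device for `[0,∞]^n`: two random elements of the extended
nonnegative orthant are equal in distribution iff all nonnegative linear
combinations are equal in distribution. -/
theorem stmt_0 {Ω : Type*} [MeasurableSpace Ω] (P : Measure Ω) [IsProbabilityMeasure P]
    (n : ℕ) (hn : 1 ≤ n) (ξ η : Ω → (Fin n → ℝ≥0∞))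
    (hξ : Measurable ξ) (hη : Measurable η) :
    P.map ξ = P.map η ↔
      ∀ u : Fin n → NNReal,
        P.map (fun ω => ∑ j, (u j : ℝ≥0∞) * ξ ω j) =
          P.map (fun ω => ∑ j, (u j : ℝ≥0∞) * η ω j) := by
  have hmapξ : ∀ u : Fin n → ℝ≥0,
      P.map (fun ω => ∑ j, (u j : ℝ≥0∞) * ξ ω j) = (P.map ξ).map (linC u) := by
    intro u
    rw [Measure.map_map (measurable_linC u) hξ]
    rfl
  have hmapη : ∀ u : Fin n → ℝ≥0,
      P.map (fun ω => ∑ j, (u j : ℝ≥0∞) * η ω j) = (P.map η).map (linC u) := by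
    intro u
    rw [Measure.map_map (measurable_linC u) hη]
    rfl
  constructor
  · intro h u
    rw [hmapξ u, hmapη u, h]
  · intro h
    haveI : IsProbabilityMeasure (P.map ξ) := Measure.isProbabilityMeasure_map hξ.aemeasurable
    haveI : IsProbabilityMeasure (P.map η) := Measure.isProbabilityMeasure_map hη.aemeasurable
    -- integrals of the generating functions agree
    have key : ∀ u : Fin n → ℝ≥0,
        ∫ x, gCW u x ∂(P.map ξ) = ∫ x, gCW u x ∂(P.map η) := by
      intro u
      have e : ∀ (T : Ω → Fin n → ℝ≥0∞) (hT : Measurable T),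
          ∫ x, gCW u x ∂(P.map T) = ∫ y, expNeg y ∂((P.map T).map (linC u)) := by
        intro T hT
        rw [integral_map (measurable_linC u).aemeasurable
          continuous_expNeg.aestronglyMeasurable]
        rfl
      rw [e ξ hξ, e η hη, ← hmapξ u, ← hmapη u, h u]
    -- all continuous real functions have equal integrals
    have main : ∀ f : C((Fin n → ℝ≥0∞), ℝ),
        ∫ x, f x ∂(P.map ξ) = ∫ x, f x ∂(P.map η) := by
      intro f
      set A := Algebra.adjoin ℝ (Set.range (@gCW n)) with hA
      have hsep : A.SeparatesPoints := by
        intro x y hxy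
        obtain ⟨j, hj⟩ : ∃ j, x j ≠ y j := Function.ne_iff.mp hxy
        refine ⟨_, ⟨gCW (Pi.single j 1), Algebra.subset_adjoin (Set.mem_range_self _), rfl⟩, ?_⟩
        simp only [gCW_apply, linC_single]
        exact fun hc => hj (expNeg_injective hc)
      have habs : ∀ ε > (0 : ℝ),
          |∫ x, f x ∂(P.map ξ) - ∫ x, f x ∂(P.map η)| ≤ 2 * ε := by
        intro ε hε
        obtain ⟨g, hg⟩ :=
          ContinuousMap.exists_mem_subalgebra_near_continuousMap_of_separatesPoints A hsep f ε hε
        have hgeq : ∫ x, (g : C((Fin n → ℝ≥0∞), ℝ)) x ∂(P.map ξ)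
            = ∫ x, (g : C((Fin n → ℝ≥0∞), ℝ)) x ∂(P.map η) :=
          integral_eq_on_adjoin key (g : C((Fin n → ℝ≥0∞), ℝ)) g.2
        have bound : ∀ (κ : Measure (Fin n → ℝ≥0∞)) [IsProbabilityMeasure κ],
            |∫ x, f x ∂κ - ∫ x, (g : C((Fin n → ℝ≥0∞), ℝ)) x ∂κ| ≤ ε := by
          intro κ _
          rw [← integral_sub (integrable_continuousMap f κ)
            (integrable_continuousMap (g : C((Fin n → ℝ≥0∞), ℝ)) κ)]
          have hb : ∀ᵐ x ∂κ, ‖f x - (g : C((Fin n → ℝ≥0∞), ℝ)) x‖ ≤ ε := by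
            refine Filter.Eventually.of_forall fun x => ?_
            have h1 : f x - (g : C((Fin n → ℝ≥0∞), ℝ)) x
                = -(((g : C((Fin n → ℝ≥0∞), ℝ)) - f) x) := by
              simp [ContinuousMap.sub_apply]
            rw [h1, norm_neg]
            exact le_trans
              (ContinuousMap.norm_coe_le_norm ((g : C((Fin n → ℝ≥0∞), ℝ)) - f) x) hg.le
          have := norm_integral_le_of_norm_le_const (μ := κ) hb
          simpa [measure_univ] using this
        calc |∫ x, f x ∂(P.map ξ) - ∫ x, f x ∂(P.map η)|
            = |(∫ x, f x ∂(P.map ξ) - ∫ x, (g : C((Fin n → ℝ≥0∞), ℝ)) x ∂(P.map ξ))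
              + ((∫ x, (g : C((Fin n → ℝ≥0∞), ℝ)) x ∂(P.map η)) - ∫ x, f x ∂(P.map η))| := by
              rw [hgeq]; ring_nf
          _ ≤ |∫ x, f x ∂(P.map ξ) - ∫ x, (g : C((Fin n → ℝ≥0∞), ℝ)) x ∂(P.map ξ)|
              + |(∫ x, (g : C((Fin n → ℝ≥0∞), ℝ)) x ∂(P.map η)) - ∫ x, f x ∂(P.map η)| :=
              abs_add_le _ _
          _ ≤ ε + ε := by
              refine add_le_add (bound (P.map ξ)) ?_
              rw [abs_sub_comm]
              exact bound (P.map η)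
          _ = 2 * ε := by ring
      have hle : |∫ x, f x ∂(P.map ξ) - ∫ x, f x ∂(P.map η)| ≤ 0 := by
        refine le_of_forall_pos_le_add fun ε hε => ?_
        have := habs (ε / 2) (by linarith)
        linarith
      have := abs_nonpos_iff.mp hle
      linarith [sub_eq_zero.mp this]
    -- conclude via outer approximation of closed sets
    refine ext_of_forall_lintegral_eq_of_IsFiniteMeasure ?_
    intro f
    have fc : Continuous fun x : Fin n → ℝ≥0∞ => ((f x : ℝ)) :=
      NNReal.continuous_coe.comp f.continuous
    have i1 : Integrable (fun x => ((f x : ℝ))) (P.map ξ) :=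
      (BoundedContinuousFunction.mkOfCompact ⟨fun x => ((f x : ℝ)), fc⟩).integrable _
    have i2 : Integrable (fun x => ((f x : ℝ))) (P.map η) :=
      (BoundedContinuousFunction.mkOfCompact ⟨fun x => ((f x : ℝ)), fc⟩).integrable _
    rw [lintegral_coe_eq_integral _ i1, lintegral_coe_eq_integral _ i2]
    congr 1
    exact main ⟨fun x => ((f x : ℝ)), fc⟩
end

section
/- Let ξ and η be random measures on a measurable space (S, 𝒮). If (ξ(A₁), …, ξ(Aₙ)) and (η(A₁), …, η(Aₙ)) are equal in distribution for every n ≥ 1 and every family of pairwise disjoint measurable sets A₁, …, Aₙ, then ξ and η are equal in distribution as random measures. -/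
/-!
The σ-algebra on `Measure S` is induced by the evaluations `μ ↦ μ s` at measurable sets, so a
finite measure on `Measure S` is determined by its finite-dimensional marginals (uniqueness of
projective limits). For arbitrary measurable `A₁, …, Aₙ`, each `μ Aᵢ` is the sum of `μ` over the
atoms of the partition generated by the `Aᵢ` that lie in `Aᵢ`; hence the marginal of a random
measure at `(Aᵢ)` is a measurable image of its marginal at these disjoint atoms.
-/

open MeasureTheory ProbabilityTheory
open scoped ENNReal

namespace MeasureTheory.Measure

variable {α β : Type*} {mα : MeasurableSpace α} [MeasurableSpace β]

theorem ext_of_map_eq_of_comap_eq {f : α → β} (hf : MeasurableSpace.comap f ‹_› = mα)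
    {μ ν : Measure α} (h : μ.map f = ν.map f) : μ = ν := by
  have hfm : Measurable f := measurable_iff_comap_le.2 hf.le
  ext s hs
  rw [← hf] at hs
  obtain ⟨t, ht, rfl⟩ := hs
  rw [← map_apply hfm ht, h, map_apply hfm ht]

theorem comap_eval_measurableSet_eq :
    MeasurableSpace.comap (fun (μ : Measure α) (s : {s : Set α // MeasurableSet s}) => μ s)
      MeasurableSpace.pi = instMeasurableSpace := by
  rw [MeasurableSpace.comap_process_pi, instMeasurableSpace, iSup_subtype']
  rfl

theorem measurable_eval_finset (J : Finset {s : Set α // MeasurableSet s}) :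
    Measurable fun (μ : Measure α) (s : J) => μ s :=
  measurable_pi_lambda _ fun s => measurable_coe s.1.2

theorem ext_of_map_eval_finset {μ ν : Measure (Measure α)} [IsFiniteMeasure μ]
    (h : ∀ J : Finset {s : Set α // MeasurableSet s},
      μ.map (fun m (s : J) => m s) = ν.map (fun m (s : J) => m s)) :
    μ = ν := by
  refine ext_of_map_eq_of_comap_eq comap_eval_measurableSet_eq ?_
  have hmarg : ∀ κ : Measure (Measure α),
      IsProjectiveLimit (κ.map fun m (s : {s : Set α // MeasurableSet s}) => m s)
        fun J => κ.map fun m (s : J) => m s := fun κ J =>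
    map_map (measurable_pi_lambda _ fun s => measurable_pi_apply _)
      (measurable_pi_lambda _ fun s => measurable_coe s.2)
  exact (hmarg μ).unique fun J => (hmarg ν J).trans (h J).symm

end MeasureTheory.Measure

section MembershipPattern

variable {S ι : Type*} [MeasurableSpace S] {A : ι → Set S}

open scoped Classical in
/-- The atoms of the partition generated by `A` are the fibres of `membershipPattern A`. -/
noncomputable def membershipPattern (A : ι → Set S) (x : S) : ι → Bool :=
  fun i => decide (x ∈ A i)

theorem measurable_membershipPattern (hA : ∀ i, MeasurableSet (A i)) :
    Measurable (membershipPattern A) :=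
  measurable_pi_lambda _ fun i => measurable_to_bool <| by
    convert hA i
    ext x
    simp [membershipPattern]

theorem measure_eq_sum_membershipPattern [Fintype ι] [DecidableEq ι]
    (hA : ∀ i, MeasurableSet (A i)) (μ : Measure S) (i : ι) :
    μ (A i) = ∑ t with t i = true, μ (membershipPattern A ⁻¹' {t}) := by
  rw [sum_measure_preimage_singleton _
    fun t _ => measurable_membershipPattern hA (measurableSet_singleton t)]
  congr
  ext x
  simp [membershipPattern]

end MembershipPattern

section RandomMeasure

variable {Ω S : Type*} [MeasurableSpace Ω] [MeasurableSpace S] {P : Measure Ω}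
  {ξ η : Ω → Measure S}

theorem Measurable.measure_apply_pi {ι : Type*} (hξ : Measurable ξ) {A : ι → Set S}
    (hA : ∀ i, MeasurableSet (A i)) : Measurable fun ω i => ξ ω (A i) :=
  measurable_pi_lambda _ fun i => (Measure.measurable_coe (hA i)).comp hξ

variable (hξ : Measurable ξ) (hη : Measurable η)
  (h : ∀ (n : ℕ) (A : Fin n → Set S), (∀ i, MeasurableSet (A i)) →
    Pairwise (Function.onFun Disjoint A) →
    P.map (fun ω => fun i => ξ ω (A i)) = P.map (fun ω => fun i => η ω (A i)))
include hξ hη h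

theorem identDistrib_eval_of_pairwise_disjoint {ι : Type*} [Fintype ι] {A : ι → Set S}
    (hA : ∀ i, MeasurableSet (A i)) (hd : Pairwise (Function.onFun Disjoint A)) :
    IdentDistrib (fun ω i => ξ ω (A i)) (fun ω i => η ω (A i)) P P := by
  let e := Fintype.equivFin ι
  have hfin : IdentDistrib (fun ω j => ξ ω (A (e.symm j))) (fun ω j => η ω (A (e.symm j))) P P :=
    ⟨(hξ.measure_apply_pi fun j => hA _).aemeasurable,
      (hη.measure_apply_pi fun j => hA _).aemeasurable,
      h _ (A ∘ e.symm) (fun j => hA _) (hd.comp_of_injective e.symm.injective)⟩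
  simpa [Function.comp_def] using
    hfin.comp (measurable_pi_lambda (fun v i => v (e i)) fun i => measurable_pi_apply _)

theorem identDistrib_eval {ι : Type*} [Fintype ι] {A : ι → Set S}
    (hA : ∀ i, MeasurableSet (A i)) :
    IdentDistrib (fun ω i => ξ ω (A i)) (fun ω i => η ω (A i)) P P := by
  classical
  have hfib := identDistrib_eval_of_pairwise_disjoint hξ hη h
    (fun t => measurable_membershipPattern hA (measurableSet_singleton t))
    (pairwise_disjoint_fiber (membershipPattern A))
  have hsum : Measurable fun (v : (ι → Bool) → ℝ≥0∞) i => ∑ t with t i = true, v t :=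
    measurable_pi_lambda _ fun i => Finset.measurable_sum _ fun t _ => measurable_pi_apply t
  convert hfib.comp hsum using 1 <;> ext ω i <;> exact measure_eq_sum_membershipPattern hA _ i

end RandomMeasure

/-- If two random measures have equal finite-dimensional distributions over all
finite families of pairwise disjoint measurable sets, then they are equal in
distribution. -/
theorem stmt_1 {Ω S : Type*} [MeasurableSpace Ω] [MeasurableSpace S]
    (P : Measure Ω) [IsProbabilityMeasure P]
    (ξ η : Ω → Measure S) (hξ : Measurable ξ) (hη : Measurable η)
    (h : ∀ (n : ℕ) (A : Fin n → Set S), (∀ i, MeasurableSet (A i)) →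
      Pairwise (Function.onFun Disjoint A) →
      P.map (fun ω => fun i => ξ ω (A i)) = P.map (fun ω => fun i => η ω (A i))) :
    P.map ξ = P.map η := by
  have := Measure.isProbabilityMeasure_map (μ := P) hξ.aemeasurable
  refine Measure.ext_of_map_eval_finset fun J => ?_
  rw [Measure.map_map (Measure.measurable_eval_finset J) hξ,
    Measure.map_map (Measure.measurable_eval_finset J) hη]
  exact (identDistrib_eval hξ hη h (A := fun s : J => (s : Set S)) fun s => s.1.2).map_eq
end

section
/- Let ξ and η be random measures on a measurable space (S, 𝒮). If ∫ f dξ and ∫ f dη are equal in distribution for each measurable function f : S → [0,∞), then ξ and η are equal in distribution. -/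
open MeasureTheory
open scoped ENNReal NNReal


noncomputable def expneg (x : ℝ≥0∞) : ℝ := if x = ∞ then 0 else Real.exp (-x.toReal)

lemma expneg_top : expneg ∞ = 0 := by simp [expneg]

lemma expneg_ne_top {x : ℝ≥0∞} (hx : x ≠ ∞) : expneg x = Real.exp (-x.toReal) := by
  simp [expneg, hx]

lemma expneg_zero : expneg 0 = 1 := by simp [expneg]

lemma expneg_nonneg (x : ℝ≥0∞) : 0 ≤ expneg x := by
  unfold expneg; split <;> positivity

lemma expneg_le_one (x : ℝ≥0∞) : expneg x ≤ 1 := by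
  unfold expneg; split
  · norm_num
  · exact Real.exp_le_one_iff.2 (by simp [ENNReal.toReal_nonneg])

lemma expneg_add (a b : ℝ≥0∞) : expneg (a + b) = expneg a * expneg b := by
  rcases eq_or_ne a ∞ with ha | ha
  · simp [ha, expneg_top]
  rcases eq_or_ne b ∞ with hb | hb
  · simp [hb, expneg_top]
  rw [expneg_ne_top ha, expneg_ne_top hb, expneg_ne_top (by finiteness),
    ENNReal.toReal_add ha hb, neg_add, Real.exp_add]

lemma expneg_injective : Function.Injective expneg := by
  intro a b hab
  rcases eq_or_ne a ∞ with ha | ha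
  · rcases eq_or_ne b ∞ with hb | hb
    · rw [ha, hb]
    · rw [ha, expneg_top, expneg_ne_top hb] at hab
      exact absurd hab.symm (Real.exp_ne_zero _)
  · rcases eq_or_ne b ∞ with hb | hb
    · rw [hb, expneg_top, expneg_ne_top ha] at hab
      exact absurd hab (Real.exp_ne_zero _)
    · rw [expneg_ne_top ha, expneg_ne_top hb] at hab
      have := Real.exp_injective hab
      have h2 : a.toReal = b.toReal := by linarith
      exact (ENNReal.toReal_eq_toReal_iff' ha hb).1 h2

lemma continuous_expneg : Continuous expneg := by
  rw [continuous_iff_continuousAt]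
  intro a
  rcases eq_or_ne a ∞ with ha | ha
  · subst ha
    rw [ContinuousAt, expneg_top]
    rw [Metric.tendsto_nhds]
    intro ε hε
    obtain ⟨M, hM⟩ : ∃ M : ℝ, 0 < M ∧ Real.exp (-M) < ε := by
      refine ⟨max 1 (-Real.log (ε/2)), lt_of_lt_of_le one_pos (le_max_left _ _), ?_⟩
      calc Real.exp (-(max 1 (-Real.log (ε/2)))) ≤ Real.exp (-(-Real.log (ε/2))) := by
            apply Real.exp_le_exp.2
            have := le_max_right (1:ℝ) (-Real.log (ε/2))
            linarith
        _ = ε/2 := by rw [neg_neg, Real.exp_log (by positivity)]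
        _ < ε := by linarith
    have hmem : Set.Ioi (ENNReal.ofReal M) ∈ nhds (∞ : ℝ≥0∞) :=
      Ioi_mem_nhds (by simp [ENNReal.ofReal_lt_top])
    filter_upwards [hmem] with x hx
    rcases eq_or_ne x ∞ with hx' | hx'
    · simpa [hx', expneg_top] using hε
    · rw [expneg_ne_top hx']
      rw [Real.dist_eq, sub_zero, abs_of_nonneg (Real.exp_nonneg _)]
      calc Real.exp (-x.toReal) ≤ Real.exp (-M) := by
            apply Real.exp_le_exp.2
            have : M ≤ x.toReal := by
              have := (ENNReal.ofReal_lt_iff_lt_toReal (le_of_lt hM.1) hx').1 hx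
              linarith [ENNReal.toReal_ofReal (le_of_lt hM.1) ▸ this]
            linarith
        _ < ε := hM.2
  · have hev : ∀ᶠ x in nhds a, expneg x = Real.exp (-x.toReal) := by
      filter_upwards [Iio_mem_nhds (lt_top_iff_ne_top.2 ha)] with x hx
      exact expneg_ne_top (ne_of_lt hx)
    have : ContinuousAt (fun x : ℝ≥0∞ => Real.exp (-x.toReal)) a :=
      (Real.continuous_exp.continuousAt).comp
        ((continuousAt_neg).comp (ENNReal.continuousAt_toReal ha))
    have : ContinuousAt expneg a := by
      rw [ContinuousAt]
      rw [show expneg a = Real.exp (-a.toReal) from expneg_ne_top ha]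
      exact this.congr' (by filter_upwards [hev] with x hx using hx.symm)
    exact this

section findim
variable {ι : Type*} [Fintype ι]

noncomputable def gexp (t : ι → ℝ≥0) : C(ι → ℝ≥0∞, ℝ) :=
  ⟨fun v => expneg (∑ i, (t i : ℝ≥0∞) * v i),
    continuous_expneg.comp (continuous_finset_sum _ fun i _ =>
      (ENNReal.continuous_const_mul ENNReal.coe_ne_top).comp (continuous_apply i))⟩

lemma gexp_zero : gexp (0 : ι → ℝ≥0) = 1 := by
  ext v
  simp [gexp, expneg_zero]

lemma gexp_mul (s t : ι → ℝ≥0) : gexp s * gexp t = gexp (s + t) := by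
  ext v
  simp only [gexp, ContinuousMap.mul_apply, ContinuousMap.coe_mk]
  rw [← expneg_add, ← Finset.sum_add_distrib]
  congr 1
  refine Finset.sum_congr rfl fun i _ => ?_
  simp only [Pi.add_apply, ENNReal.coe_add]
  ring

lemma measurable_sumfun (t : ι → ℝ≥0) :
    Measurable (fun v : ι → ℝ≥0∞ => ∑ i, (t i : ℝ≥0∞) * v i) :=
  Finset.measurable_sum _ fun i _ => (measurable_pi_apply i).const_mul _

lemma findim {Ω : Type*} [MeasurableSpace Ω] (P : Measure Ω) [IsProbabilityMeasure P]
    (X Y : Ω → (ι → ℝ≥0∞)) (hX : Measurable X) (hY : Measurable Y)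
    (h : ∀ t : ι → ℝ≥0, P.map (fun ω => ∑ i, (t i : ℝ≥0∞) * X ω i)
        = P.map (fun ω => ∑ i, (t i : ℝ≥0∞) * Y ω i)) :
    P.map X = P.map Y := by
  set μ := P.map X with hμ
  set ν := P.map Y with hν
  have hμP : IsProbabilityMeasure μ := Measure.isProbabilityMeasure_map hX.aemeasurable
  have hνP : IsProbabilityMeasure ν := Measure.isProbabilityMeasure_map hY.aemeasurable
  -- integrals of generators agree
  have key : ∀ t : ι → ℝ≥0, ∫ v, gexp t v ∂μ = ∫ v, gexp t v ∂ν := by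
    intro t
    have hsm : Measurable (fun v : ι → ℝ≥0∞ => ∑ i, (t i : ℝ≥0∞) * v i) := measurable_sumfun t
    have hesm : AEStronglyMeasurable expneg ((P.map (fun ω => ∑ i, (t i : ℝ≥0∞) * X ω i))) :=
      continuous_expneg.aestronglyMeasurable
    calc ∫ v, gexp t v ∂μ
        = ∫ x, expneg x ∂(μ.map (fun v => ∑ i, (t i : ℝ≥0∞) * v i)) := by
          rw [integral_map hsm.aemeasurable continuous_expneg.aestronglyMeasurable]
          rfl
      _ = ∫ x, expneg x ∂(P.map (fun ω => ∑ i, (t i : ℝ≥0∞) * X ω i)) := by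
          rw [hμ, Measure.map_map hsm hX]
          rfl
      _ = ∫ x, expneg x ∂(P.map (fun ω => ∑ i, (t i : ℝ≥0∞) * Y ω i)) := by rw [h t]
      _ = ∫ x, expneg x ∂(ν.map (fun v => ∑ i, (t i : ℝ≥0∞) * v i)) := by
          rw [hν, Measure.map_map hsm hY]
          rfl
      _ = ∫ v, gexp t v ∂ν := by
          rw [integral_map hsm.aemeasurable continuous_expneg.aestronglyMeasurable]
          rfl
  have integ : ∀ (κ : Measure (ι → ℝ≥0∞)) (_ : IsProbabilityMeasure κ) (f : C(ι → ℝ≥0∞, ℝ)),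
      Integrable (⇑f) κ := fun κ _ f =>
    BoundedContinuousFunction.integrable κ (BoundedContinuousFunction.mkOfCompact f)
  -- submonoid of generators
  let M : Submonoid C(ι → ℝ≥0∞, ℝ) :=
    { carrier := Set.range gexp
      one_mem' := ⟨0, gexp_zero⟩
      mul_mem' := by
        rintro _ _ ⟨s, rfl⟩ ⟨t, rfl⟩
        exact ⟨s + t, (gexp_mul s t).symm⟩ }
  -- submodule of functions where integrals agree
  let Z : Submodule ℝ C(ι → ℝ≥0∞, ℝ) :=
    { carrier := {f | ∫ v, f v ∂μ = ∫ v, f v ∂ν}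
      add_mem' := by
        intro f g hf hg
        simp only [Set.mem_setOf_eq, ContinuousMap.add_apply] at *
        rw [integral_add (integ μ hμP f) (integ μ hμP g),
          integral_add (integ ν hνP f) (integ ν hνP g), hf, hg]
      zero_mem' := by simp
      smul_mem' := by
        intro c f hf
        simp only [Set.mem_setOf_eq, ContinuousMap.coe_smul, Pi.smul_apply,
          smul_eq_mul] at *
        rw [integral_const_mul, integral_const_mul, hf] }
  -- the agreement set is closed
  have hZc : IsClosed {f : C(ι → ℝ≥0∞, ℝ) | ∫ v, f v ∂μ = ∫ v, f v ∂ν} := by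
    have hlip : ∀ (κ : Measure (ι → ℝ≥0∞)) (_ : IsProbabilityMeasure κ),
        Continuous (fun f : C(ι → ℝ≥0∞, ℝ) => ∫ v, f v ∂κ) := by
      intro κ hκ
      refine LipschitzWith.continuous (K := 1) ?_
      refine LipschitzWith.of_dist_le_mul fun f g => ?_
      rw [dist_eq_norm, dist_eq_norm, ← integral_sub (integ κ hκ f) (integ κ hκ g)]
      have := BoundedContinuousFunction.norm_integral_le_mul_norm κ
        (BoundedContinuousFunction.mkOfCompact (f - g))
      simp only [BoundedContinuousFunction.norm_mkOfCompact, measure_univ, ENNReal.toReal_one,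
        one_mul] at this
      calc ‖∫ v, f v - g v ∂κ‖ = ‖∫ v, (f - g) v ∂κ‖ := by simp [ContinuousMap.sub_apply]
        _ ≤ ‖f - g‖ := by simpa using this
        _ = ↑(1 : ℝ≥0) * ‖f - g‖ := by simp
    exact isClosed_eq (hlip μ hμP) (hlip ν hνP)
  -- all continuous functions agree
  have hall : ∀ f : C(ι → ℝ≥0∞, ℝ), ∫ v, f v ∂μ = ∫ v, f v ∂ν := by
    have hsep : (Algebra.adjoin ℝ (Set.range (gexp (ι := ι)))).SeparatesPoints := by
      classical
      intro v w hvw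
      obtain ⟨i, hi⟩ := Function.ne_iff.1 hvw
      refine ⟨gexp (fun j => if j = i then 1 else 0), ⟨gexp _,
        Algebra.subset_adjoin ⟨_, rfl⟩, rfl⟩, ?_⟩
      have hg1 : ∀ u : ι → ℝ≥0∞, gexp (fun j => if j = i then 1 else 0) u = expneg (u i) := by
        intro u
        show expneg _ = _
        congr 1
        rw [Finset.sum_eq_single i]
        · simp
        · intro j _ hj; simp [hj]
        · simp
      rw [hg1 v, hg1 w]
      exact fun hc => hi (expneg_injective hc)
    have htop := ContinuousMap.subalgebra_topologicalClosure_eq_top_of_separatesPoints _ hsep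
    intro f
    have hfc : f ∈ closure ((Algebra.adjoin ℝ (Set.range (gexp (ι := ι)))) :
        Set C(ι → ℝ≥0∞, ℝ)) := by
      rw [← Subalgebra.topologicalClosure_coe, htop]
      trivial
    have hsub : ((Algebra.adjoin ℝ (Set.range (gexp (ι := ι)))) : Set C(ι → ℝ≥0∞, ℝ)) ⊆
        {f : C(ι → ℝ≥0∞, ℝ) | ∫ v, f v ∂μ = ∫ v, f v ∂ν} := by
      intro f hf
      have : f ∈ Submodule.span ℝ (Submonoid.closure (Set.range (gexp (ι := ι))) :
          Set C(ι → ℝ≥0∞, ℝ)) := by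
        rw [← Algebra.adjoin_eq_span]
        exact hf
      rw [show Submonoid.closure (Set.range (gexp (ι := ι))) = M from Submonoid.closure_eq M]
        at this
      have hle : Submodule.span ℝ (M : Set C(ι → ℝ≥0∞, ℝ)) ≤ Z := by
        rw [Submodule.span_le]
        rintro _ ⟨t, rfl⟩
        exact key t
      exact hle this
    exact closure_minimal hsub hZc hfc
  -- conclude
  apply ext_of_forall_lintegral_eq_of_IsFiniteMeasure
  intro f
  have h1 : ∫⁻ x, (f x : ℝ≥0∞) ∂μ ≠ ∞ := (f.lintegral_lt_top_of_nnreal μ).ne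
  have h2 : ∫⁻ x, (f x : ℝ≥0∞) ∂ν ≠ ∞ := (f.lintegral_lt_top_of_nnreal ν).ne
  have := hall ⟨fun x => (f x : ℝ), NNReal.continuous_coe.comp f.continuous⟩
  simp only [ContinuousMap.coe_mk] at this
  rw [← BoundedContinuousFunction.toReal_lintegral_coe_eq_integral f μ,
    ← BoundedContinuousFunction.toReal_lintegral_coe_eq_integral f ν] at this
  exact (ENNReal.toReal_eq_toReal_iff' h1 h2).1 this

end findim


/-- If the integrals `∫ f dξ` and `∫ f dη` are equal in distribution for each
measurable `f : S → [0,∞)`, then the random measures `ξ` and `η` are equal in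
distribution. -/
theorem stmt_2 {Ω S : Type*} [MeasurableSpace Ω] [MeasurableSpace S]
    (P : Measure Ω) [IsProbabilityMeasure P]
    (ξ η : Ω → Measure S) (hξ : Measurable ξ) (hη : Measurable η)
    (h : ∀ f : S → NNReal, Measurable f →
      P.map (fun ω => ∫⁻ x, (f x : ℝ≥0∞) ∂(ξ ω)) =
        P.map (fun ω => ∫⁻ x, (f x : ℝ≥0∞) ∂(η ω))) :
    P.map ξ = P.map η := by
  classical
  set C : Set (Set (Measure S)) :=
    { t | ∃ (I : Finset (Set S)) (B : Set S → Set ℝ≥0∞),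
        (∀ A ∈ I, MeasurableSet A) ∧ (∀ A ∈ I, MeasurableSet (B A)) ∧
        t = ⋂ A ∈ I, (fun μ : Measure S => μ A) ⁻¹' (B A) } with hC
  -- C is a π-system
  have hPi : IsPiSystem C := by
    rintro t1 ⟨I₁, B₁, hI₁, hB₁, rfl⟩ t2 ⟨I₂, B₂, hI₂, hB₂, rfl⟩ -
    refine ⟨I₁ ∪ I₂, fun A =>
      (if A ∈ I₁ then B₁ A else Set.univ) ∩ (if A ∈ I₂ then B₂ A else Set.univ),
      ?_, ?_, ?_⟩
    · intro A hA
      rcases Finset.mem_union.1 hA with hA | hA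
      · exact hI₁ A hA
      · exact hI₂ A hA
    · intro A _
      refine MeasurableSet.inter ?_ ?_ <;> split <;>
        first | exact hB₁ _ ‹_› | exact hB₂ _ ‹_› | exact MeasurableSet.univ
    · ext μ
      simp only [Set.mem_inter_iff, Set.mem_iInter, Set.mem_preimage, Finset.mem_union]
      constructor
      · rintro ⟨h1, h2⟩ A hA
        rcases hA with hA | hA
        · constructor <;> split <;>
            first | exact h1 A ‹_› | exact h2 A ‹_› | exact Set.mem_univ _
        · constructor <;> split <;>
            first | exact h1 A ‹_› | exact h2 A ‹_› | exact Set.mem_univ _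
      · intro hh
        constructor
        · intro A hA
          have := (hh A (Or.inl hA)).1
          simpa [hA] using this
        · intro A hA
          have := (hh A (Or.inr hA)).2
          simpa [hA] using this
  -- C generates the σ-algebra of measures
  have hgen : (Measure.instMeasurableSpace : MeasurableSpace (Measure S)) =
      MeasurableSpace.generateFrom C := by
    apply le_antisymm
    · refine iSup₂_le fun s hs => ?_
      rw [MeasurableSpace.comap_le_iff_le_map]
      intro B hB
      rw [MeasurableSpace.map_def]
      apply MeasurableSpace.measurableSet_generateFrom
      refine ⟨{s}, fun _ => B, by simpa using hs, ?_, by simp⟩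
      intro A _
      exact hB
    · refine MeasurableSpace.generateFrom_le ?_
      rintro t ⟨I, B, hI, hBm, rfl⟩
      refine MeasurableSet.biInter I.countable_toSet fun A hA => ?_
      exact Measure.measurable_coe (hI A hA) (hBm A hA)
  -- agreement on C
  have hagree : ∀ t ∈ C, P.map ξ t = P.map η t := by
    rintro t ⟨I, B, hI, hBm, rfl⟩
    have htm : MeasurableSet (⋂ A ∈ I, (fun μ : Measure S => μ A) ⁻¹' (B A)) := by
      refine MeasurableSet.biInter I.countable_toSet fun A hA => ?_
      exact Measure.measurable_coe (hI A hA) (hBm A hA)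
    set ι := {x // x ∈ I}
    set Xξ : Ω → ι → ℝ≥0∞ := fun ω A => ξ ω (A : Set S) with hXξ
    set Xη : Ω → ι → ℝ≥0∞ := fun ω A => η ω (A : Set S) with hXη
    have hXξm : Measurable Xξ :=
      measurable_pi_lambda _ fun A => (Measure.measurable_coe (hI A A.2)).comp hξ
    have hXηm : Measurable Xη :=
      measurable_pi_lambda _ fun A => (Measure.measurable_coe (hI A A.2)).comp hη
    have hpiB : MeasurableSet (Set.univ.pi fun A : ι => B (A : Set S)) :=
      MeasurableSet.univ_pi fun A => hBm A A.2
    -- the Laplace hypothesis in finite-dimensional form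
    have hmaps : P.map Xξ = P.map Xη := by
      apply findim P Xξ Xη hXξm hXηm
      intro t
      have hf : Measurable (fun x : S => ∑ A : ι, t A * Set.indicator (A : Set S) 1 x) :=
        Finset.measurable_sum _ fun A _ => (measurable_one.indicator (hI A A.2)).const_mul _
      have hint : ∀ m : Measure S,
          ∫⁻ x, ((∑ A : ι, t A * Set.indicator (A : Set S) 1 x : ℝ≥0) : ℝ≥0∞) ∂m
            = ∑ A : ι, (t A : ℝ≥0∞) * m (A : Set S) := by
        intro m
        have hcast : ∀ x : S, ((∑ A : ι, t A * Set.indicator (A : Set S) 1 x : ℝ≥0) : ℝ≥0∞)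
            = ∑ A : ι, (t A : ℝ≥0∞) * Set.indicator (A : Set S) 1 x := by
          intro x
          push_cast
          simp [Set.indicator_apply]
        simp_rw [hcast]
        calc ∫⁻ x, ∑ A : ι, (t A : ℝ≥0∞) * Set.indicator (A : Set S) 1 x ∂m
            = ∑ A : ι, ∫⁻ x, (t A : ℝ≥0∞) * Set.indicator (A : Set S) 1 x ∂m :=
              lintegral_finset_sum _ fun A _ =>
                ((measurable_one.indicator (hI A A.2)).const_mul _)
          _ = ∑ A : ι, (t A : ℝ≥0∞) * m (A : Set S) := by
              refine Finset.sum_congr rfl fun A _ => ?_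
              rw [lintegral_const_mul _ (measurable_one.indicator (hI A A.2)),
                lintegral_indicator_one (hI A A.2)]
      have := h _ hf
      simp_rw [hint] at this
      exact this
    -- transfer to the cylinder set
    have hset : ξ ⁻¹' (⋂ A ∈ I, (fun μ : Measure S => μ A) ⁻¹' (B A))
        = Xξ ⁻¹' (Set.univ.pi fun A : ι => B (A : Set S)) := by
      ext ω
      simp only [Set.mem_preimage, Set.mem_iInter, Set.mem_univ_pi]
      exact ⟨fun hh A => hh A A.2, fun hh A hA => hh ⟨A, hA⟩⟩
    have hset' : η ⁻¹' (⋂ A ∈ I, (fun μ : Measure S => μ A) ⁻¹' (B A))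
        = Xη ⁻¹' (Set.univ.pi fun A : ι => B (A : Set S)) := by
      ext ω
      simp only [Set.mem_preimage, Set.mem_iInter, Set.mem_univ_pi]
      exact ⟨fun hh A => hh A A.2, fun hh A hA => hh ⟨A, hA⟩⟩
    rw [Measure.map_apply hξ htm, Measure.map_apply hη htm, hset, hset',
      ← Measure.map_apply hXξm hpiB, ← Measure.map_apply hXηm hpiB, hmaps]
  -- conclude by the π-system uniqueness theorem
  have h1 : IsProbabilityMeasure (P.map ξ) := Measure.isProbabilityMeasure_map hξ.aemeasurable
  have h2 : IsProbabilityMeasure (P.map η) := Measure.isProbabilityMeasure_map hη.aemeasurable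
  exact ext_of_generate_finite C hgen hPi hagree (by simp [h1.measure_univ, h2.measure_univ])
end

section
/- Let (S, 𝒮, μ) be an atomless measure space, J ≥ 1, sets A_j ∈ 𝒮 with 0 < μ(A_j) < ∞ for 1 ≤ j ≤ J, and a sequence c_k ↓ 0 of positive reals. Then there exist increasing sequences of measurable sets (A_j^n)_{n≥1} with A_j^n ↑ A_j as n → ∞ for each j, a subsequence (c_{k(n)}), and nonnegative integers m_{jn} such that 0 < μ(A_j \ A_j^n) ≤ c_{k(n)} and μ(A_j^n) = m_{jn} · c_{k(n)} for all j and n. -/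
open MeasureTheory
open scoped ENNReal

/-- A measure is atomless if every set of positive measure has a measurable
subset of strictly smaller positive measure. -/
def Atomless {S : Type*} [MeasurableSpace S] (μ : Measure S) : Prop :=
  ∀ M : Set S, MeasurableSet M → 0 < μ M →
    ∃ C, C ⊆ M ∧ MeasurableSet C ∧ 0 < μ C ∧ μ C < μ M

/-!
By Sierpiński's theorem, in an atomless measure space every value `t ≤ μ A < ∞` is the measure
of a measurable subset of `A`: build subsets greedily, each time adding a piece that carries at
least half of what can still be added without exceeding `t`; if the union fell short of `t`, a
small leftover piece could have been added at every stage, forcing unbounded growth. Applying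
this to successive differences realises any increasing levels `t n ↑ μ A` by an increasing chain
of subsets, which exhausts `A` once a null set is added to it.

For the levels take `m c_κ`, the largest multiple of `c_κ` strictly below `μ (A_j)`. Passing to a
subsequence along which `c_{k(n+1)}` is smaller than every gap `μ (A_j) - m_{jn} c_{k(n)}`
makes these levels increase with `n`.
-/

open Set Filter Topology

theorem exists_seq_of_exists_succ {α : Type*} (P : ℕ → α → Prop) (r : α → α → Prop)
    (h0 : ∃ x, P 0 x) (hsucc : ∀ n x, P n x → ∃ y, P (n + 1) y ∧ r x y) :
    ∃ f : ℕ → α, (∀ n, P n (f n)) ∧ ∀ n, r (f n) (f (n + 1)) := by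
  obtain ⟨x₀, hx₀⟩ := h0
  choose g hgP hgr using hsucc
  let F : (n : ℕ) → {x // P n x} :=
    fun n => Nat.rec ⟨x₀, hx₀⟩ (fun n x => ⟨g n x.1 x.2, hgP n x.1 x.2⟩) n
  exact ⟨fun n => (F n).1, fun n => (F n).2, fun n => hgr n _ (F n).2⟩

theorem exists_nat_mul_lt_le_add {x y : ℝ} (hx : 0 < x) (hy : 0 < y) :
    ∃ m : ℕ, m * y < x ∧ x ≤ m * y + y := by
  have hxy : 0 < x / y := div_pos hx hy
  have hceil : 1 ≤ ⌈x / y⌉₊ := Nat.one_le_ceil_iff.mpr hxy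
  refine ⟨⌈x / y⌉₊ - 1, ?_, ?_⟩
  · rw [Nat.cast_sub hceil, Nat.cast_one, sub_mul, one_mul, sub_lt_iff_lt_add,
      ← lt_div_iff₀ hy, add_div, div_self hy.ne']
    exact Nat.ceil_lt_add_one hxy.le
  · rw [Nat.cast_sub hceil, Nat.cast_one, sub_mul, one_mul, sub_add_cancel, ← div_le_iff₀ hy]
    exact Nat.le_ceil _

theorem exists_strictMono_monotone_nat_mul_approx {ι : Type*} [Finite ι] {a : ι → ℝ}
    (ha : ∀ i, 0 < a i) {c : ℕ → ℝ} (hc_pos : ∀ k, 0 < c k) (hc_lim : Tendsto c atTop (𝓝 0)) :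
    ∃ (k : ℕ → ℕ) (m : ι → ℕ → ℕ), StrictMono k ∧ ∀ i,
      Monotone (fun n => (m i n : ℝ) * c (k n)) ∧
      Tendsto (fun n => (m i n : ℝ) * c (k n)) atTop (𝓝 (a i)) ∧
      ∀ n, (m i n : ℝ) * c (k n) < a i ∧ a i ≤ m i n * c (k n) + c (k n) := by
  choose M hMlt hMle using fun i κ => exists_nat_mul_lt_le_add (ha i) (hc_pos κ)
  -- the mesh at the next index is finer than every gap left at the current one
  have hnext : ∀ κ, ∃ κ', κ < κ' ∧ ∀ i, c κ' < a i - M i κ * c κ := fun κ =>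
    ((eventually_gt_atTop κ).and (hc_lim.eventually
      (eventually_all.2 fun i => gt_mem_nhds (sub_pos.2 (hMlt i κ))))).exists
  choose next hlt hfine using hnext
  let k : ℕ → ℕ := fun n => next^[n] 0
  have hk_succ : ∀ n, k (n + 1) = next (k n) := fun n => Function.iterate_succ_apply' _ _ _
  have hk : StrictMono k := strictMono_nat_of_lt_succ fun n => hk_succ n ▸ hlt (k n)
  refine ⟨k, fun i n => M i (k n), hk, fun i => ⟨monotone_nat_of_le_succ fun n => ?_, ?_,
    fun n => ⟨hMlt i (k n), hMle i (k n)⟩⟩⟩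
  · show (M i (k n) : ℝ) * c (k n) ≤ M i (k (n + 1)) * c (k (n + 1))
    have hgap := hfine (k n) i
    have hcover := hMle i (k (n + 1))
    rw [hk_succ] at hcover ⊢
    linarith
  · have hck : Tendsto (fun n => a i - c (k n)) atTop (𝓝 (a i)) := by
      simpa using tendsto_const_nhds.sub (hc_lim.comp hk.tendsto_atTop)
    exact tendsto_of_tendsto_of_tendsto_of_le_of_le hck tendsto_const_nhds
      (fun n => by linarith [hMle i (k n)]) (fun n => (hMlt i (k n)).le)

theorem ENNReal.nat_mul_le_of_add_le_succ {u : ℕ → ℝ≥0∞} {δ : ℝ≥0∞}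
    (h : ∀ n, u n + δ ≤ u (n + 1)) (n : ℕ) : n * δ ≤ u n := by
  induction n with
  | zero => simp
  | succ n ih =>
    rw [Nat.cast_succ, add_one_mul]
    exact (add_le_add_left ih δ).trans (h n)

theorem ENNReal.exists_mem_half_sSup_le {X : Set ℝ≥0∞} (hX : X.Nonempty) (htop : sSup X ≠ ⊤) :
    ∃ x ∈ X, sSup X / 2 ≤ x := by
  rcases eq_or_ne (sSup X) 0 with h | h
  · obtain ⟨x, hx⟩ := hX
    exact ⟨x, hx, by simp [h]⟩
  · obtain ⟨x, hx, hlt⟩ := lt_sSup_iff.1 (ENNReal.half_lt_self h htop)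
    exact ⟨x, hx, hlt.le⟩

namespace MeasureTheory.Measure

variable {S : Type*} [MeasurableSpace S] (μ : Measure S)

noncomputable def maxIncrement (A : Set S) (t : ℝ≥0∞) (C : Set S) : ℝ≥0∞ :=
  sSup (μ '' {D | MeasurableSet D ∧ D ⊆ A \ C ∧ μ C + μ D ≤ t})

variable {μ}

theorem le_maxIncrement {A C D : Set S} {t : ℝ≥0∞} (hD : MeasurableSet D) (hDA : D ⊆ A \ C)
    (ht : μ C + μ D ≤ t) : μ D ≤ μ.maxIncrement A t C :=
  le_sSup ⟨D, ⟨hD, hDA, ht⟩, rfl⟩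

theorem exists_superset_add_half_maxIncrement_le {A C : Set S} {t : ℝ≥0∞}
    (hC : MeasurableSet C) (hCA : C ⊆ A) (hCt : μ C ≤ t) (ht : t ≠ ⊤) :
    ∃ C', (MeasurableSet C' ∧ C' ⊆ A ∧ μ C' ≤ t) ∧
      C ⊆ C' ∧ μ C + μ.maxIncrement A t C / 2 ≤ μ C' := by
  have hne : (μ '' {D | MeasurableSet D ∧ D ⊆ A \ C ∧ μ C + μ D ≤ t}).Nonempty :=
    ⟨_, ∅, ⟨.empty, empty_subset _, by simpa using hCt⟩, rfl⟩
  have hbdd : μ.maxIncrement A t C ≠ ⊤ := ne_top_of_le_ne_top ht <|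
    sSup_le <| by rintro _ ⟨D, ⟨-, -, hD⟩, rfl⟩; exact le_of_add_le_right hD
  obtain ⟨_, ⟨D, ⟨hD, hDA, hDt⟩, rfl⟩, hhalf⟩ := ENNReal.exists_mem_half_sSup_le hne hbdd
  have hunion : μ (C ∪ D) = μ C + μ D :=
    measure_union (disjoint_sdiff_right.mono_right hDA) hD
  refine ⟨C ∪ D, ⟨hC.union hD, union_subset hCA (hDA.trans sdiff_subset), hunion ▸ hDt⟩,
    subset_union_left, ?_⟩
  rw [hunion]
  gcongr
  exact hhalf

end MeasureTheory.Measure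

namespace Atomless

variable {S : Type*} [MeasurableSpace S] {μ : Measure S}

theorem exists_subset_measure_pos_le_half (hμ : Atomless μ) {M : Set S} (hM : MeasurableSet M)
    (h0 : 0 < μ M) (hfin : μ M ≠ ⊤) :
    ∃ C ⊆ M, MeasurableSet C ∧ 0 < μ C ∧ μ C ≤ μ M / 2 := by
  obtain ⟨C, hCM, hC, hC0, hClt⟩ := hμ M hM h0
  by_cases h : μ C ≤ μ M / 2
  · exact ⟨C, hCM, hC, hC0, h⟩
  have hdiff : μ (M \ C) = μ M - μ C := measure_sdiff hCM hC.nullMeasurableSet hClt.ne_top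
  refine ⟨M \ C, sdiff_subset, hM.diff hC, hdiff ▸ tsub_pos_of_lt hClt, ?_⟩
  calc μ (M \ C) = μ M - μ C := hdiff
    _ ≤ μ M - μ M / 2 := tsub_le_tsub_left (not_le.1 h).le _
    _ = μ M / 2 := ENNReal.sub_half hfin

theorem exists_subset_measure_pos_le (hμ : Atomless μ) {M : Set S} (hM : MeasurableSet M)
    (h0 : 0 < μ M) (hfin : μ M ≠ ⊤) {ε : ℝ≥0∞} (hε : 0 < ε) :
    ∃ C ⊆ M, MeasurableSet C ∧ 0 < μ C ∧ μ C ≤ ε := by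
  have hpow : ∀ n : ℕ, ∃ C ⊆ M, MeasurableSet C ∧ 0 < μ C ∧ μ C ≤ μ M * 2⁻¹ ^ n := by
    intro n
    induction n with
    | zero => exact ⟨M, subset_rfl, hM, h0, by simp⟩
    | succ n ih =>
      obtain ⟨C, hCM, hC, hC0, hCle⟩ := ih
      obtain ⟨D, hDC, hD, hD0, hDle⟩ := hμ.exists_subset_measure_pos_le_half hC hC0
        (ne_top_of_le_ne_top hfin (measure_mono hCM))
      refine ⟨D, hDC.trans hCM, hD, hD0, ?_⟩
      calc μ D ≤ μ C / 2 := hDle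
        _ ≤ μ M * 2⁻¹ ^ n / 2 := by gcongr
        _ = μ M * 2⁻¹ ^ (n + 1) := by rw [pow_succ, ← mul_assoc, div_eq_mul_inv]
  obtain ⟨n, hn⟩ := ENNReal.exists_inv_two_pow_lt (ENNReal.div_pos hε.ne' hfin).ne'
  obtain ⟨C, hCM, hC, hC0, hCle⟩ := hpow n
  refine ⟨C, hCM, hC, hC0, hCle.trans ?_⟩
  rw [mul_comm]
  exact ENNReal.mul_le_of_le_div hn.le

theorem exists_subset_measure_eq (hμ : Atomless μ) {A : Set S} (hA : MeasurableSet A)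
    (hfin : μ A ≠ ⊤) {t : ℝ≥0∞} (ht : t ≤ μ A) :
    ∃ C ⊆ A, MeasurableSet C ∧ μ C = t := by
  have htop : t ≠ ⊤ := ne_top_of_le_ne_top hfin ht
  obtain ⟨C, hC, hstep⟩ := exists_seq_of_exists_succ
    (fun _ C => MeasurableSet C ∧ C ⊆ A ∧ μ C ≤ t)
    (fun C C' => C ⊆ C' ∧ μ C + μ.maxIncrement A t C / 2 ≤ μ C')
    ⟨∅, .empty, empty_subset _, by simp⟩
    fun _ C hC => Measure.exists_superset_add_half_maxIncrement_le hC.1 hC.2.1 hC.2.2 htop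
  have hmono : Monotone C := monotone_nat_of_le_succ fun n => (hstep n).1
  set U := ⋃ n, C n
  have hU : MeasurableSet U := .iUnion fun n => (hC n).1
  have hUA : U ⊆ A := iUnion_subset fun n => (hC n).2.1
  have hUt : μ U ≤ t := by
    rw [hmono.measure_iUnion]
    exact iSup_le fun n => (hC n).2.2
  refine ⟨U, hUA, hU, hUt.antisymm ?_⟩
  by_contra! hlt
  -- a piece `E` of `A \ U` that still fits below `t` could be added at every stage, so the
  -- greedy choices would grow by at least `μ E / 2` each time
  have hdiff : μ (A \ U) = μ A - μ U := measure_sdiff hUA hU.nullMeasurableSet hlt.ne_top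
  obtain ⟨E, hEA, hE, hE0, hEt⟩ := hμ.exists_subset_measure_pos_le (hA.diff hU)
    (hdiff ▸ tsub_pos_of_lt (hlt.trans_le ht))
    (ne_top_of_le_ne_top hfin (measure_mono sdiff_subset)) (tsub_pos_of_lt hlt)
  have hgrow : ∀ n, μ (C n) + μ E / 2 ≤ μ (C (n + 1)) := by
    intro n
    refine le_trans ?_ (hstep n).2
    gcongr
    refine Measure.le_maxIncrement hE
      (hEA.trans (sdiff_subset_sdiff_right (subset_iUnion C n))) ?_
    calc μ (C n) + μ E ≤ μ U + (t - μ U) := add_le_add (measure_mono (subset_iUnion C n)) hEt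
      _ = t := add_tsub_cancel_of_le hUt
  obtain ⟨n, hn⟩ := ENNReal.exists_nat_mul_gt (ENNReal.half_pos hE0.ne').ne' htop
  exact (hn.trans_le (ENNReal.nat_mul_le_of_add_le_succ hgrow n)).not_ge (hC n).2.2

theorem exists_monotone_measure_eq (hμ : Atomless μ) {A : Set S} (hA : MeasurableSet A)
    (hfin : μ A ≠ ⊤) {t : ℕ → ℝ≥0∞} (ht : Monotone t) (htA : ∀ n, t n ≤ μ A) :
    ∃ B : ℕ → Set S, Monotone B ∧ ∀ n, B n ⊆ A ∧ MeasurableSet (B n) ∧ μ (B n) = t n := by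
  obtain ⟨B, hB, hBsucc⟩ := exists_seq_of_exists_succ
    (fun n B => B ⊆ A ∧ MeasurableSet B ∧ μ B = t n) (· ⊆ ·)
    (hμ.exists_subset_measure_eq hA hfin (htA 0))
    fun n B ⟨hBA, hB, hBt⟩ => by
      have hdiff : μ (A \ B) = μ A - t n :=
        hBt ▸ measure_sdiff hBA hB.nullMeasurableSet (hBt ▸ ne_top_of_le_ne_top hfin (htA n))
      obtain ⟨D, hDA, hD, hDt⟩ := hμ.exists_subset_measure_eq (hA.diff hB)
        (ne_top_of_le_ne_top hfin (measure_mono sdiff_subset))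
        (hdiff ▸ tsub_le_tsub_right (htA (n + 1)) (t n))
      refine ⟨B ∪ D, ⟨union_subset hBA (hDA.trans sdiff_subset), hB.union hD, ?_⟩,
        subset_union_left⟩
      rw [measure_union (disjoint_sdiff_right.mono_right hDA) hD, hBt, hDt,
        add_tsub_cancel_of_le (ht n.le_succ)]
  exact ⟨B, monotone_nat_of_le_succ hBsucc, hB⟩

theorem exists_monotone_iUnion_eq_measure_eq (hμ : Atomless μ) {A : Set S}
    (hA : MeasurableSet A) (hfin : μ A ≠ ⊤) {t : ℕ → ℝ≥0∞} (ht : Monotone t)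
    (hlim : Tendsto t atTop (𝓝 (μ A))) :
    ∃ B : ℕ → Set S, (∀ n, MeasurableSet (B n)) ∧ Monotone B ∧ ⋃ n, B n = A ∧
      ∀ n, B n ⊆ A ∧ μ (B n) = t n := by
  obtain ⟨B, hBmono, hB⟩ :=
    hμ.exists_monotone_measure_eq hA hfin ht fun n => ht.ge_of_tendsto hlim n
  have hUA : ⋃ n, B n ⊆ A := iUnion_subset fun n => (hB n).1
  have hU : MeasurableSet (⋃ n, B n) := .iUnion fun n => (hB n).2.1
  set N := A \ ⋃ n, B n
  have hN : μ N = 0 := by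
    rw [measure_sdiff hUA hU.nullMeasurableSet (ne_top_of_le_ne_top hfin (measure_mono hUA)),
      hBmono.measure_iUnion]
    simp only [(hB _).2.2, tendsto_nhds_unique (tendsto_atTop_iSup ht) hlim, tsub_self]
  refine ⟨fun n => B n ∪ N, fun n => (hB n).2.1.union (hA.diff hU),
    fun m n h => union_subset_union_left _ (hBmono h), ?_,
    fun n => ⟨union_subset (hB n).1 sdiff_subset, ?_⟩⟩
  · rw [← iUnion_union, union_sdiff_cancel hUA]
  · rw [measure_congr (union_ae_eq_left_of_ae_eq_empty (ae_eq_empty.2 hN)), (hB n).2.2]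

end Atomless

theorem stmt_3_general {S : Type*} [MeasurableSpace S] (μ : Measure S) (hμ : Atomless μ)
    (J : ℕ) (A : Fin J → Set S)
    (hA : ∀ j, MeasurableSet (A j)) (hA0 : ∀ j, 0 < μ (A j)) (hAfin : ∀ j, μ (A j) < ⊤)
    (c : ℕ → ℝ) (hc_pos : ∀ k, 0 < c k)
    (hc_lim : Filter.Tendsto c Filter.atTop (nhds 0)) :
    ∃ (B : Fin J → ℕ → Set S) (k : ℕ → ℕ) (m : Fin J → ℕ → ℕ),
      StrictMono k ∧
      ∀ j, (∀ n, MeasurableSet (B j n)) ∧ Monotone (B j) ∧ (⋃ n, B j n) = A j ∧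
        ∀ n, B j n ⊆ A j ∧
          0 < μ (A j \ B j n) ∧ μ (A j \ B j n) ≤ ENNReal.ofReal (c (k n)) ∧
          μ (B j n) = (m j n : ℝ≥0∞) * ENNReal.ofReal (c (k n)) := by
  set a : Fin J → ℝ := fun j => (μ (A j)).toReal
  have ha : ∀ j, 0 < a j := fun j => ENNReal.toReal_pos (hA0 j).ne' (hAfin j).ne
  obtain ⟨k, m, hk, hm⟩ := exists_strictMono_monotone_nat_mul_approx ha hc_pos hc_lim
  choose B hB using fun j => hμ.exists_monotone_iUnion_eq_measure_eq (hA j) (hAfin j).ne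
    (fun n n' h => ENNReal.ofReal_le_ofReal ((hm j).1 h))
    (ENNReal.ofReal_toReal (hAfin j).ne ▸ ENNReal.tendsto_ofReal (hm j).2.1)
  refine ⟨B, k, m, hk, fun j => ?_⟩
  obtain ⟨hBmeas, hBmono, hBU, hBn⟩ := hB j
  refine ⟨hBmeas, hBmono, hBU, fun n => ?_⟩
  obtain ⟨hBA, hBμ⟩ := hBn n
  obtain ⟨hlt, hle⟩ := (hm j).2.2 n
  have hdiff : μ (A j \ B j n) = ENNReal.ofReal (a j - m j n * c (k n)) := by
    rw [measure_sdiff hBA (hBmeas n).nullMeasurableSet (hBμ ▸ ENNReal.ofReal_ne_top), hBμ,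
      ENNReal.ofReal_sub _ (mul_nonneg (Nat.cast_nonneg _) (hc_pos _).le),
      ENNReal.ofReal_toReal (hAfin j).ne]
  refine ⟨hBA, ?_, ?_, ?_⟩
  · rw [hdiff]; exact ENNReal.ofReal_pos.2 (sub_pos.2 hlt)
  · rw [hdiff]; exact ENNReal.ofReal_le_ofReal (by linarith)
  · rw [hBμ, ENNReal.ofReal_mul (Nat.cast_nonneg _), ENNReal.ofReal_natCast]

/-- Approximation of finitely many sets of finite positive measure by increasing
sequences whose measures are integer multiples of a subsequence of `c_k ↓ 0`. -/
theorem stmt_3 {S : Type*} [MeasurableSpace S] (μ : Measure S) (hμ : Atomless μ)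
    (J : ℕ) (hJ : 1 ≤ J) (A : Fin J → Set S)
    (hA : ∀ j, MeasurableSet (A j)) (hA0 : ∀ j, 0 < μ (A j)) (hAfin : ∀ j, μ (A j) < ⊤)
    (c : ℕ → ℝ) (hc_pos : ∀ k, 0 < c k) (hc_anti : Antitone c)
    (hc_lim : Filter.Tendsto c Filter.atTop (nhds 0)) :
    ∃ (B : Fin J → ℕ → Set S) (k : ℕ → ℕ) (m : Fin J → ℕ → ℕ),
      StrictMono k ∧
      ∀ j, (∀ n, MeasurableSet (B j n)) ∧ Monotone (B j) ∧ (⋃ n, B j n) = A j ∧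
        ∀ n, B j n ⊆ A j ∧
          0 < μ (A j \ B j n) ∧ μ (A j \ B j n) ≤ ENNReal.ofReal (c (k n)) ∧
          μ (B j n) = (m j n : ℝ≥0∞) * ENNReal.ofReal (c (k n)) :=
  stmt_3_general μ hμ J A hA hA0 hAfin c hc_pos hc_lim
end

section
/- Let ξ be a random measure on a measure space (S, 𝒮, μ). If (ξ(A₁),…,ξ(Aₙ)) equals in distribution (ξ(B₁),…,ξ(Bₙ)) for any two families of pairwise disjoint measurable sets with μ(A_j)=μ(B_j) for all j, then ξ∘f⁻¹ and ξ∘g⁻¹ are equal in distribution for every two measurable functions f, g : S → ℝ₊ with μ∘f⁻¹ = μ∘g⁻¹. -/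
/-!
The law of a random measure is determined by its finite-dimensional distributions, and in fact
by those over pairwise disjoint families: each `m (A i)` is the sum of the masses of the atoms of
the Boolean algebra generated by `A`, so the joint law of `(m (A i))ᵢ` is a measurable image of
the joint law over the atoms. For disjoint measurable `Aᵢ ⊆ ℝ≥0`, the preimages `f⁻¹' Aᵢ` and
`g⁻¹' Aᵢ` are disjoint with `μ (f⁻¹' Aᵢ) = μ (g⁻¹' Aᵢ)`, so exchangeability identifies the
finite-dimensional distributions of `ξ ∘ f⁻¹` and `ξ ∘ g⁻¹` over them.
-/

open MeasureTheory
open scoped ENNReal NNReal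

namespace Set

open Function

variable {α ι : Type*}

def atom (A : ι → Set α) (b : ι → Bool) : Set α :=
  ⋂ i, if b i then A i else (A i)ᶜ

theorem pairwise_disjoint_atom (A : ι → Set α) : Pairwise (Disjoint on atom A) := by
  intro b c hbc
  obtain ⟨i, hi⟩ := Function.ne_iff.mp hbc
  refine disjoint_left.mpr fun x hxb hxc => ?_
  have hb := mem_iInter.mp hxb i
  have hc := mem_iInter.mp hxc i
  cases hbi : b i <;> cases hci : c i <;> simp_all

theorem iUnion_atom_eq (A : ι → Set α) (i : ι) :
    ⋃ (b : ι → Bool) (_ : b i), atom A b = A i := by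
  classical
  ext x
  simp only [mem_iUnion, exists_prop]
  refine ⟨fun ⟨b, hbi, hx⟩ => by simpa [hbi] using mem_iInter.mp hx i, fun hx => ?_⟩
  refine ⟨fun j => decide (x ∈ A j), by simpa using hx, mem_iInter.mpr fun j => ?_⟩
  by_cases hxj : x ∈ A j <;> simp [hxj]

end Set

namespace MeasureTheory

open Function Set

variable {α ι : Type*} [MeasurableSpace α]

theorem measurableSet_atom [Countable ι] {A : ι → Set α} (hA : ∀ i, MeasurableSet (A i))
    (b : ι → Bool) : MeasurableSet (atom A b) :=
  .iInter fun i => by cases b i <;> simp [hA i]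

theorem measure_eq_sum_atom [Fintype ι] [DecidableEq ι] (ν : Measure α) {A : ι → Set α}
    (hA : ∀ i, MeasurableSet (A i)) (i : ι) :
    ν (A i) = ∑ b with b i, ν (atom A b) := by
  rw [← measure_biUnion_finset
    (fun b _ c _ hbc => pairwise_disjoint_atom A hbc) fun b _ => measurableSet_atom hA b]
  congr 1
  simpa using (iUnion_atom_eq A i).symm

namespace Measure

theorem measurable_coe_pi {A : ι → Set α} (hA : ∀ i, MeasurableSet (A i)) :
    Measurable fun m : Measure α => fun i => m (A i) :=
  measurable_pi_lambda _ fun i => measurable_coe (hA i)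

theorem ext_of_map_coe_finset {Λ₁ Λ₂ : Measure (Measure α)} [IsFiniteMeasure Λ₁]
    (h : ∀ t : Finset (Set α), (∀ s ∈ t, MeasurableSet s) →
      Λ₁.map (fun m (s : t) => m s) = Λ₂.map (fun m (s : t) => m s)) :
    Λ₁ = Λ₂ := by
  have hmeas (t : Finset (Set α)) (ht : ∀ s ∈ t, MeasurableSet s) :
      Measurable fun m : Measure α => fun s : t => m s :=
    measurable_coe_pi fun s => ht s s.2
  have hgen := generateFrom_piiUnionInter_measurableSet
    (fun s => (borel ℝ≥0∞).comap fun m : Measure α => m s) {s | MeasurableSet s}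
  refine ext_of_generate_finite _ hgen.symm (isPiSystem_piiUnionInter _
    (fun s => @MeasurableSpace.isPiSystem_measurableSet _
      ((borel ℝ≥0∞).comap fun m : Measure α => m s)) _) ?_ ?_
  · rintro _ ⟨t, ht, E, hE, rfl⟩
    choose B hB hBE using hE
    rw [← BorelSpace.measurable_eq] at hB
    have hcyl :
        ⋂ s ∈ t, E s = (fun m (s : t) => m s) ⁻¹' univ.pi fun s : t => B s s.2 := by
      ext m
      simp only [mem_iInter, mem_preimage, mem_univ_pi, Subtype.forall]
      refine forall₂_congr fun s hs => ?_
      rw [← hBE s hs, mem_preimage]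
    have hpi : MeasurableSet (univ.pi fun s : t => B s s.2) := .univ_pi fun s => hB s s.2
    rw [hcyl, ← map_apply (hmeas t ht) hpi, ← map_apply (hmeas t ht) hpi, h t ht]
  · have h₀ := congrArg (· univ) (h ∅ (by simp))
    simpa [map_apply (hmeas ∅ (by simp))] using h₀

theorem map_coe_eq_of_pairwise_disjoint {Λ₁ Λ₂ : Measure (Measure α)}
    (h : ∀ (n : ℕ) (A : Fin n → Set α), (∀ i, MeasurableSet (A i)) →
      Pairwise (Disjoint on A) → Λ₁.map (fun m i => m (A i)) = Λ₂.map (fun m i => m (A i)))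
    [Fintype ι] {A : ι → Set α} (hA : ∀ i, MeasurableSet (A i)) :
    Λ₁.map (fun m i => m (A i)) = Λ₂.map (fun m i => m (A i)) := by
  classical
  let e := (Fintype.equivFin (ι → Bool)).symm
  let B k := atom A (e k)
  have hB : ∀ k, MeasurableSet (B k) := fun k => measurableSet_atom hA _
  let sumAtoms (v : Fin _ → ℝ≥0∞) (i : ι) : ℝ≥0∞ := ∑ k ∈ Finset.univ.filter (e · i), v k
  have hsum : (fun m : Measure α => fun i => m (A i)) = sumAtoms ∘ fun m k => m (B k) := by
    funext m i
    simp only [measure_eq_sum_atom m hA i, comp_apply, sumAtoms, B, Finset.sum_filter]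
    exact (e.sum_comp fun b => if b i then m (atom A b) else 0).symm
  have hmeas : Measurable sumAtoms :=
    measurable_pi_lambda _ fun i => Finset.measurable_sum _ fun k _ => measurable_pi_apply k
  rw [hsum, ← map_map hmeas (measurable_coe_pi hB), ← map_map hmeas (measurable_coe_pi hB),
    h _ B hB fun k l hkl => pairwise_disjoint_atom A (e.injective.ne hkl)]

theorem ext_of_map_coe_pairwise_disjoint {Λ₁ Λ₂ : Measure (Measure α)} [IsFiniteMeasure Λ₁]
    (h : ∀ (n : ℕ) (A : Fin n → Set α), (∀ i, MeasurableSet (A i)) →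
      Pairwise (Disjoint on A) → Λ₁.map (fun m i => m (A i)) = Λ₂.map (fun m i => m (A i))) :
    Λ₁ = Λ₂ :=
  ext_of_map_coe_finset fun t ht => map_coe_eq_of_pairwise_disjoint h fun s : t => ht s s.2

theorem map_coe_pushforward {Ω β : Type*} [MeasurableSpace Ω] [MeasurableSpace β]
    (P : Measure Ω)
    {ξ : Ω → Measure α} (hξ : Measurable ξ) {f : α → β} (hf : Measurable f)
    {A : ι → Set β} (hA : ∀ i, MeasurableSet (A i)) :
    (P.map fun ω => (ξ ω).map f).map (fun m i => m (A i)) =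
      P.map fun ω i => ξ ω (f ⁻¹' A i) := by
  have hξf : Measurable fun ω => (ξ ω).map f := (measurable_map f hf).comp hξ
  rw [map_map (measurable_coe_pi hA) hξf]
  congr
  funext ω i
  exact map_apply hf (hA i)

end Measure

end MeasureTheory

/-- If a random measure `ξ` is `μ`-exchangeable (equal finite-dimensional
distributions over disjoint families with equal `μ`-measures), then the
pushforwards `ξ∘f⁻¹` and `ξ∘g⁻¹` are equal in distribution for all measurable
`f, g : S → ℝ₊` with `μ∘f⁻¹ = μ∘g⁻¹`. -/
theorem stmt_4 {Ω S : Type*} [MeasurableSpace Ω] [MeasurableSpace S]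
    (P : Measure Ω) [IsProbabilityMeasure P] (μ : Measure S)
    (ξ : Ω → Measure S) (hξ : Measurable ξ)
    (hexch : ∀ (n : ℕ) (A B : Fin n → Set S),
      (∀ i, MeasurableSet (A i)) → (∀ i, MeasurableSet (B i)) →
      Pairwise (Function.onFun Disjoint A) → Pairwise (Function.onFun Disjoint B) →
      (∀ i, μ (A i) = μ (B i)) →
      P.map (fun ω => fun i => ξ ω (A i)) = P.map (fun ω => fun i => ξ ω (B i))) :
    ∀ f g : S → NNReal, Measurable f → Measurable g → μ.map f = μ.map g →
      P.map (fun ω => (ξ ω).map f) = P.map (fun ω => (ξ ω).map g) := by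
  intro f g hf hg hfg
  have : IsProbabilityMeasure (P.map fun ω => (ξ ω).map f) :=
    Measure.isProbabilityMeasure_map ((Measure.measurable_map f hf).comp hξ).aemeasurable
  refine Measure.ext_of_map_coe_pairwise_disjoint fun n A hA hdisj => ?_
  rw [Measure.map_coe_pushforward P hξ hf hA, Measure.map_coe_pushforward P hξ hg hA]
  refine hexch n _ _ (fun i => hf (hA i)) (fun i => hg (hA i))
    (fun i j hij => (hdisj hij).preimage f) (fun i j hij => (hdisj hij).preimage g) fun i => ?_
  rw [← Measure.map_apply hf (hA i), ← Measure.map_apply hg (hA i), hfg]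
end

section
/- Two random measures ξ and η on a measurable space (S, 𝒮) are zonoid equivalent if and only if E|∫ f dξ| = E|∫ f dη| for each measurable function f : S → ℝ with E ∫ |f| dξ < ∞ and E ∫ |f| dη < ∞. -/
/-! Both sides say that `E|∫ g dξ| = E|∫ g dη|` for a class of integrands `g`: zonoid
equivalence is the case of the simple functions `∑ uⱼ 1_{Aⱼ}`, for which `∫ g dξ = ∑ uⱼ ξ(Aⱼ)`
almost surely. A general `f` is the pointwise limit of simple functions `gₘ` with
`|gₘ| ≤ 2|f|`, and dominated convergence, first in `x` for fixed `ω` and then in `ω` with the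
dominating function `∫ 2|f| dξ`, carries the identity over from the `gₘ` to `f`. -/

open MeasureTheory Filter
open scoped ENNReal Topology

section

variable {Ω S : Type*} [MeasurableSpace Ω] [MeasurableSpace S] {P : Measure Ω}
  {ξ : Ω → Measure S}

def ZonoidEquivalent (P : Measure Ω) (ξ η : Ω → Measure S) : Prop :=
  ∀ (n : ℕ) (u : Fin n → ℝ) (A : Fin n → Set S),
    (∀ i, MeasurableSet (A i)) → Pairwise (Function.onFun Disjoint A) →
    (∀ i, ∫⁻ ω, ξ ω (A i) ∂P ≠ ⊤) → (∀ i, ∫⁻ ω, η ω (A i) ∂P ≠ ⊤) →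
    ∫ ω, |∑ i, u i * (ξ ω (A i)).toReal| ∂P = ∫ ω, |∑ i, u i * (η ω (A i)).toReal| ∂P

lemma Measurable.measure_apply (hξ : Measurable ξ) {A : Set S} (hA : MeasurableSet A) :
    Measurable fun ω ↦ ξ ω A :=
  (Measure.measurable_coe hA).comp hξ

lemma measurable_integral_of_measurable (hξ : Measurable ξ) {f : S → ℝ} (hf : Measurable f) :
    Measurable fun ω ↦ ∫ x, f x ∂ξ ω :=
  (hf.stronglyMeasurable.integral_kernel (κ := ⟨ξ, hξ⟩)).measurable

lemma ae_lintegral_lt_top (hξ : Measurable ξ) {φ : S → ℝ≥0∞} (hφ : Measurable φ)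
    (h : ∫⁻ ω, ∫⁻ x, φ x ∂ξ ω ∂P ≠ ⊤) : ∀ᵐ ω ∂P, ∫⁻ x, φ x ∂ξ ω < ⊤ :=
  ae_lt_top (hφ.lintegral_kernel (κ := ⟨ξ, hξ⟩)) h

lemma ae_integrable_of_lintegral_lintegral_ne_top (hξ : Measurable ξ) {f : S → ℝ}
    (hf : Measurable f) (h : ∫⁻ ω, ∫⁻ x, ENNReal.ofReal |f x| ∂ξ ω ∂P ≠ ⊤) :
    ∀ᵐ ω ∂P, Integrable f (ξ ω) := by
  filter_upwards [ae_lintegral_lt_top hξ hf.abs.ennreal_ofReal h] with ω hω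
  refine ⟨hf.aestronglyMeasurable, ?_⟩
  simpa only [HasFiniteIntegral, Real.enorm_eq_ofReal_abs] using hω

lemma lintegral_apply_ne_top_of_le {φ : S → ℝ≥0∞} (hφ : Measurable φ) {A : Set S}
    {ε : ℝ≥0∞} (hε : ε ≠ 0) (hA : ∀ x ∈ A, ε ≤ φ x) (h : ∫⁻ ω, ∫⁻ x, φ x ∂ξ ω ∂P ≠ ⊤) :
    ∫⁻ ω, ξ ω A ∂P ≠ ⊤ := by
  have hmarkov : ∀ ω, ε * ξ ω A ≤ ∫⁻ x, φ x ∂ξ ω := fun ω ↦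
    calc ε * ξ ω A ≤ ε * ξ ω {x | ε ≤ φ x} := by gcongr; exact hA
      _ ≤ ∫⁻ x, φ x ∂ξ ω := mul_meas_ge_le_lintegral₀ hφ.aemeasurable ε
  have hle : ε * ∫⁻ ω, ξ ω A ∂P ≤ ∫⁻ ω, ∫⁻ x, φ x ∂ξ ω ∂P :=
    (lintegral_const_mul_le _ _).trans (lintegral_mono hmarkov)
  exact fun htop ↦ h (top_le_iff.1 (by simpa [htop, hε] using hle))

lemma lintegral_lintegral_ofReal_le_mul {φ ψ : S → ℝ} {C : ℝ} (hC : 0 ≤ C)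
    (hφψ : ∀ x, φ x ≤ C * ψ x) :
    ∫⁻ ω, ∫⁻ x, ENNReal.ofReal (φ x) ∂ξ ω ∂P ≤
      ENNReal.ofReal C * ∫⁻ ω, ∫⁻ x, ENNReal.ofReal (ψ x) ∂ξ ω ∂P :=
  calc ∫⁻ ω, ∫⁻ x, ENNReal.ofReal (φ x) ∂ξ ω ∂P
      ≤ ∫⁻ ω, ∫⁻ x, ENNReal.ofReal C * ENNReal.ofReal (ψ x) ∂ξ ω ∂P :=
        lintegral_mono fun _ ↦ lintegral_mono fun x ↦
          (ENNReal.ofReal_le_ofReal (hφψ x)).trans_eq (ENNReal.ofReal_mul hC)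
    _ = _ := by simp only [lintegral_const_mul' _ _ ENNReal.ofReal_ne_top]

lemma lintegral_apply_preimage_singleton_ne_top {g : S → ℝ} (hg : Measurable g)
    (hgfin : ∫⁻ ω, ∫⁻ x, ENNReal.ofReal |g x| ∂ξ ω ∂P ≠ ⊤) {c : ℝ} (hc : c ≠ 0) :
    ∫⁻ ω, ξ ω (g ⁻¹' {c}) ∂P ≠ ⊤ :=
  lintegral_apply_ne_top_of_le hg.abs.ennreal_ofReal (ε := ENNReal.ofReal |c|)
    (by simpa using hc) (fun x hx ↦ by rw [Set.mem_preimage.1 hx]) hgfin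

lemma ae_integral_simpleFunc_eq_sum (hξ : Measurable ξ) (g : SimpleFunc S ℝ)
    (hgfin : ∫⁻ ω, ∫⁻ x, ENNReal.ofReal |g x| ∂ξ ω ∂P ≠ ⊤) :
    ∀ᵐ ω ∂P, ∫ x, g x ∂ξ ω = ∑ c : {c ∈ g.range | c ≠ 0}, c * (ξ ω (g ⁻¹' {c.1})).toReal := by
  filter_upwards [ae_integrable_of_lintegral_lintegral_ne_top hξ g.measurable hgfin] with ω hω
  rw [← g.integral_eq_integral hω, g.integral_eq_sum_filter, ← Finset.sum_coe_sort]
  simp only [smul_eq_mul, mul_comm, Measure.real]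

lemma integral_sum_indicator_const {μ : Measure S} {ι : Type*} [Fintype ι] {u : ι → ℝ}
    {A : ι → Set S} (hA : ∀ i, MeasurableSet (A i)) (hμA : ∀ i, μ (A i) ≠ ⊤) :
    ∫ x, ∑ i, (A i).indicator (fun _ ↦ u i) x ∂μ = ∑ i, u i * (μ (A i)).toReal := by
  rw [integral_finsetSum _ fun i _ ↦
    (integrable_indicator_iff (hA i)).2 (integrableOn_const (hμA i))]
  refine Finset.sum_congr rfl fun i _ ↦ ?_
  rw [integral_indicator_const _ (hA i), smul_eq_mul, measureReal_def, mul_comm]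

lemma lintegral_ofReal_abs_sum_indicator_const_le {μ : Measure S} {ι : Type*} [Fintype ι]
    {u : ι → ℝ} {A : ι → Set S} (hA : ∀ i, MeasurableSet (A i)) :
    ∫⁻ x, ENNReal.ofReal |∑ i, (A i).indicator (fun _ ↦ u i) x| ∂μ ≤
      ∑ i, ENNReal.ofReal |u i| * μ (A i) := by
  simp_rw [← Real.enorm_eq_ofReal_abs]
  calc ∫⁻ x, ‖∑ i, (A i).indicator (fun _ ↦ u i) x‖ₑ ∂μ
      ≤ ∫⁻ x, ∑ i, (A i).indicator (fun _ ↦ ‖u i‖ₑ) x ∂μ := by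
        refine lintegral_mono fun x ↦ (enorm_sum_le _ _).trans_eq ?_
        simp only [enorm_indicator_eq_indicator_enorm]
    _ = ∑ i, ‖u i‖ₑ * μ (A i) := by
        rw [lintegral_finsetSum _ fun i _ ↦ measurable_const.indicator (hA i)]
        simp only [lintegral_indicator_const (hA _)]

lemma lintegral_lintegral_ofReal_abs_sum_indicator_const_ne_top (hξ : Measurable ξ)
    {ι : Type*} [Fintype ι] {u : ι → ℝ} {A : ι → Set S} (hA : ∀ i, MeasurableSet (A i))
    (hξA : ∀ i, ∫⁻ ω, ξ ω (A i) ∂P ≠ ⊤) :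
    ∫⁻ ω, ∫⁻ x, ENNReal.ofReal |∑ i, (A i).indicator (fun _ ↦ u i) x| ∂ξ ω ∂P ≠ ⊤ := by
  refine ne_top_of_le_ne_top ?_
    (lintegral_mono fun ω ↦ lintegral_ofReal_abs_sum_indicator_const_le (μ := ξ ω) hA)
  rw [lintegral_finsetSum _ fun i _ ↦ (hξ.measure_apply (hA i)).const_mul _]
  simp only [lintegral_const_mul' _ _ ENNReal.ofReal_ne_top]
  exact ENNReal.sum_ne_top.2 fun i _ ↦ ENNReal.mul_ne_top ENNReal.ofReal_ne_top (hξA i)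

lemma ae_integral_sum_indicator_const (hξ : Measurable ξ) {ι : Type*} [Fintype ι]
    {u : ι → ℝ} {A : ι → Set S} (hA : ∀ i, MeasurableSet (A i))
    (hξA : ∀ i, ∫⁻ ω, ξ ω (A i) ∂P ≠ ⊤) :
    ∀ᵐ ω ∂P, ∫ x, ∑ i, (A i).indicator (fun _ ↦ u i) x ∂ξ ω = ∑ i, u i * (ξ ω (A i)).toReal := by
  have hfin : ∀ᵐ ω ∂P, ∀ i, ξ ω (A i) < ⊤ :=
    ae_all_iff.2 fun i ↦ ae_lt_top (hξ.measure_apply (hA i)) (hξA i)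
  filter_upwards [hfin] with ω hω
  exact integral_sum_indicator_const hA fun i ↦ (hω i).ne

lemma tendsto_integral_abs_integral_of_dominated (hξ : Measurable ξ) {g : ℕ → S → ℝ}
    {f b : S → ℝ} (hg : ∀ m, Measurable (g m)) (hb : Measurable b)
    (hbfin : ∫⁻ ω, ∫⁻ x, ENNReal.ofReal (b x) ∂ξ ω ∂P ≠ ⊤) (hgb : ∀ m x, |g m x| ≤ b x)
    (hlim : ∀ x, Tendsto (g · x) atTop (𝓝 (f x))) :
    Tendsto (fun m ↦ ∫ ω, |∫ x, g m x ∂ξ ω| ∂P) atTop (𝓝 (∫ ω, |∫ x, f x ∂ξ ω| ∂P)) := by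
  have hb_nonneg : ∀ x, 0 ≤ b x := fun x ↦ (abs_nonneg _).trans (hgb 0 x)
  have hb_meas : Measurable fun x ↦ ENNReal.ofReal (b x) := hb.ennreal_ofReal
  have hfin := ae_lintegral_lt_top hξ hb_meas hbfin
  refine tendsto_integral_of_dominated_convergence
    (fun ω ↦ (∫⁻ x, ENNReal.ofReal (b x) ∂ξ ω).toReal)
    (fun m ↦ (measurable_integral_of_measurable hξ (hg m)).abs.aestronglyMeasurable)
    (integrable_toReal_of_lintegral_ne_top
      (hb_meas.lintegral_kernel (κ := ⟨ξ, hξ⟩)).aemeasurable hbfin) (fun m ↦ ?_) ?_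
  · filter_upwards [hfin] with ω hω
    rw [norm_abs_eq_norm]
    refine (norm_integral_le_lintegral_norm _).trans (ENNReal.toReal_mono hω.ne ?_)
    exact lintegral_mono fun x ↦
      ENNReal.ofReal_le_ofReal ((Real.norm_eq_abs _).trans_le (hgb m x))
  · filter_upwards [hfin] with ω hω
    have hbint : Integrable b (ξ ω) :=
      ⟨hb.aestronglyMeasurable, (hasFiniteIntegral_iff_ofReal (ae_of_all _ hb_nonneg)).2 hω⟩
    refine (continuous_abs.tendsto _).comp (tendsto_integral_of_dominated_convergence b
      (fun m ↦ (hg m).aestronglyMeasurable) hbint (fun m ↦ ae_of_all _ fun x ↦ ?_)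
      (ae_of_all _ hlim))
    exact (Real.norm_eq_abs _).trans_le (hgb m x)

namespace ZonoidEquivalent

variable {η : Ω → Measure S}

lemma integral_abs_sum_eq (h : ZonoidEquivalent P ξ η) {ι : Type*} [Fintype ι] (u : ι → ℝ)
    (A : ι → Set S) (hA : ∀ i, MeasurableSet (A i))
    (hdisj : Pairwise (Function.onFun Disjoint A))
    (hξA : ∀ i, ∫⁻ ω, ξ ω (A i) ∂P ≠ ⊤) (hηA : ∀ i, ∫⁻ ω, η ω (A i) ∂P ≠ ⊤) :
    ∫ ω, |∑ i, u i * (ξ ω (A i)).toReal| ∂P = ∫ ω, |∑ i, u i * (η ω (A i)).toReal| ∂P := by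
  set e := (Fintype.equivFin ι).symm
  convert h _ (u ∘ e) (A ∘ e) (fun i ↦ hA (e i)) (hdisj.comp_of_injective e.injective)
    (fun i ↦ hξA (e i)) (fun i ↦ hηA (e i)) using 4 <;>
  exact (e.sum_comp fun i ↦ u i * _).symm

lemma integral_abs_integral_simpleFunc_eq (h : ZonoidEquivalent P ξ η) (hξ : Measurable ξ)
    (hη : Measurable η) (g : SimpleFunc S ℝ)
    (hξg : ∫⁻ ω, ∫⁻ x, ENNReal.ofReal |g x| ∂ξ ω ∂P ≠ ⊤)
    (hηg : ∫⁻ ω, ∫⁻ x, ENNReal.ofReal |g x| ∂η ω ∂P ≠ ⊤) :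
    ∫ ω, |∫ x, g x ∂ξ ω| ∂P = ∫ ω, |∫ x, g x ∂η ω| ∂P := by
  rw [integral_congr_ae ((ae_integral_simpleFunc_eq_sum hξ g hξg).mono
      fun ω hω ↦ congrArg abs hω),
    integral_congr_ae ((ae_integral_simpleFunc_eq_sum hη g hηg).mono
      fun ω hω ↦ congrArg abs hω)]
  have hc : ∀ c : {c ∈ g.range | c ≠ 0}, c.1 ≠ 0 := fun c ↦ (Finset.mem_filter.1 c.2).2
  exact h.integral_abs_sum_eq _ _ (fun c ↦ g.measurableSet_fiber c)
    (fun c d hcd ↦ (Set.disjoint_singleton.2 (Subtype.coe_injective.ne hcd)).preimage g)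
    (fun c ↦ lintegral_apply_preimage_singleton_ne_top g.measurable hξg (hc c))
    (fun c ↦ lintegral_apply_preimage_singleton_ne_top g.measurable hηg (hc c))

lemma integral_abs_integral_eq (h : ZonoidEquivalent P ξ η) (hξ : Measurable ξ)
    (hη : Measurable η) {f : S → ℝ} (hf : Measurable f)
    (hξf : ∫⁻ ω, ∫⁻ x, ENNReal.ofReal |f x| ∂ξ ω ∂P ≠ ⊤)
    (hηf : ∫⁻ ω, ∫⁻ x, ENNReal.ofReal |f x| ∂η ω ∂P ≠ ⊤) :
    ∫ ω, |∫ x, f x ∂ξ ω| ∂P = ∫ ω, |∫ x, f x ∂η ω| ∂P := by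
  set g : ℕ → SimpleFunc S ℝ := SimpleFunc.approxOn f hf Set.univ 0 (Set.mem_univ 0)
  have hgf : ∀ m x, |g m x| ≤ 2 * |f x| := fun m x ↦ by
    simpa only [Real.norm_eq_abs, two_mul] using
      SimpleFunc.norm_approxOn_zero_le hf (Set.mem_univ 0) x m
  have hlim : ∀ x, Tendsto (g · x) atTop (𝓝 (f x)) := fun x ↦
    SimpleFunc.tendsto_approxOn hf (Set.mem_univ 0) (subset_closure (Set.mem_univ _))
  have hfin : ∀ ζ : Ω → Measure S, ∫⁻ ω, ∫⁻ x, ENNReal.ofReal |f x| ∂ζ ω ∂P ≠ ⊤ →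
      ∀ φ : S → ℝ, (∀ x, φ x ≤ 2 * |f x|) → ∫⁻ ω, ∫⁻ x, ENNReal.ofReal (φ x) ∂ζ ω ∂P ≠ ⊤ :=
    fun ζ hζ φ hφ ↦ ne_top_of_le_ne_top (ENNReal.mul_ne_top ENNReal.ofReal_ne_top hζ)
      (lintegral_lintegral_ofReal_le_mul zero_le_two hφ)
  have hξlim := tendsto_integral_abs_integral_of_dominated hξ (fun m ↦ (g m).measurable)
    (hf.abs.const_mul 2) (hfin ξ hξf _ fun _ ↦ le_rfl) hgf hlim
  have hηlim := tendsto_integral_abs_integral_of_dominated hη (fun m ↦ (g m).measurable)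
    (hf.abs.const_mul 2) (hfin η hηf _ fun _ ↦ le_rfl) hgf hlim
  refine tendsto_nhds_unique (hξlim.congr fun m ↦ ?_) hηlim
  exact h.integral_abs_integral_simpleFunc_eq hξ hη (g m) (hfin ξ hξf _ (hgf m))
    (hfin η hηf _ (hgf m))

end ZonoidEquivalent

lemma zonoidEquivalent_of_integral_abs_integral_eq {η : Ω → Measure S} (hξ : Measurable ξ)
    (hη : Measurable η)
    (h : ∀ f : S → ℝ, Measurable f → ∫⁻ ω, ∫⁻ x, ENNReal.ofReal |f x| ∂ξ ω ∂P ≠ ⊤ →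
      ∫⁻ ω, ∫⁻ x, ENNReal.ofReal |f x| ∂η ω ∂P ≠ ⊤ →
      ∫ ω, |∫ x, f x ∂ξ ω| ∂P = ∫ ω, |∫ x, f x ∂η ω| ∂P) :
    ZonoidEquivalent P ξ η := by
  intro n u A hA _ hξA hηA
  have hf := h (fun x ↦ ∑ i, (A i).indicator (fun _ ↦ u i) x)
    (Finset.measurable_sum _ fun i _ ↦ measurable_const.indicator (hA i))
    (lintegral_lintegral_ofReal_abs_sum_indicator_const_ne_top hξ hA hξA)
    (lintegral_lintegral_ofReal_abs_sum_indicator_const_ne_top hη hA hηA)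
  rwa [integral_congr_ae ((ae_integral_sum_indicator_const hξ hA hξA).mono
      fun ω hω ↦ congrArg abs hω),
    integral_congr_ae ((ae_integral_sum_indicator_const hη hA hηA).mono
      fun ω hω ↦ congrArg abs hω)] at hf

end

theorem stmt_6_general {Ω S : Type*} [MeasurableSpace Ω] [MeasurableSpace S]
    (P : Measure Ω)
    (ξ η : Ω → Measure S) (hξ : Measurable ξ) (hη : Measurable η) :
    (∀ (n : ℕ) (u : Fin n → ℝ) (A : Fin n → Set S),
      (∀ i, MeasurableSet (A i)) → Pairwise (Function.onFun Disjoint A) →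
      (∀ i, ∫⁻ ω, ξ ω (A i) ∂P ≠ ⊤) → (∀ i, ∫⁻ ω, η ω (A i) ∂P ≠ ⊤) →
      ∫ ω, |∑ i, u i * (ξ ω (A i)).toReal| ∂P =
        ∫ ω, |∑ i, u i * (η ω (A i)).toReal| ∂P)
    ↔
    (∀ f : S → ℝ, Measurable f →
      ∫⁻ ω, ∫⁻ x, ENNReal.ofReal |f x| ∂(ξ ω) ∂P ≠ ⊤ →
      ∫⁻ ω, ∫⁻ x, ENNReal.ofReal |f x| ∂(η ω) ∂P ≠ ⊤ →
      ∫ ω, |∫ x, f x ∂(ξ ω)| ∂P = ∫ ω, |∫ x, f x ∂(η ω)| ∂P) :=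
  ⟨fun h _ hf hξf hηf ↦ ZonoidEquivalent.integral_abs_integral_eq h hξ hη hf hξf hηf,
    zonoidEquivalent_of_integral_abs_integral_eq hξ hη⟩

/-- Two random measures are zonoid equivalent (equality of `E|Σ u_j ξ(A_j)|`
over disjoint families with integrable masses) if and only if
`E|∫ f dξ| = E|∫ f dη|` for each measurable `f : S → ℝ` with
`E ∫ |f| dξ < ∞` and `E ∫ |f| dη < ∞`. -/
theorem stmt_6 {Ω S : Type*} [MeasurableSpace Ω] [MeasurableSpace S]
    (P : Measure Ω) [IsProbabilityMeasure P]
    (ξ η : Ω → Measure S) (hξ : Measurable ξ) (hη : Measurable η) :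
    (∀ (n : ℕ) (u : Fin n → ℝ) (A : Fin n → Set S),
      (∀ i, MeasurableSet (A i)) → Pairwise (Function.onFun Disjoint A) →
      (∀ i, ∫⁻ ω, ξ ω (A i) ∂P ≠ ⊤) → (∀ i, ∫⁻ ω, η ω (A i) ∂P ≠ ⊤) →
      ∫ ω, |∑ i, u i * (ξ ω (A i)).toReal| ∂P =
        ∫ ω, |∑ i, u i * (η ω (A i)).toReal| ∂P)
    ↔
    (∀ f : S → ℝ, Measurable f →
      ∫⁻ ω, ∫⁻ x, ENNReal.ofReal |f x| ∂(ξ ω) ∂P ≠ ⊤ →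
      ∫⁻ ω, ∫⁻ x, ENNReal.ofReal |f x| ∂(η ω) ∂P ≠ ⊤ →
      ∫ ω, |∫ x, f x ∂(ξ ω)| ∂P = ∫ ω, |∫ x, f x ∂(η ω)| ∂P) :=
  stmt_6_general P ξ η hξ hη
end

section
/- Let (S, 𝒮, μ) be a measure space and η a random measure on S that is μ-swap-invariant under a probability measure Q. Let X be a random variable with X > 0 Q-almost surely and E_Q[X⁻¹] < ∞, and define a probability measure P by dP/dQ = 1/(X · E_Q[X⁻¹]). Then the random measure ξ = X·η is μ-swap-invariant under P. -/
open MeasureTheory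
open scoped ENNReal

/-! With `c = E_Q[X⁻¹]`, the density `1 / (X c)` cancels the factor `X`:
`E_P[X F] = c⁻¹ E_Q[F]` for every `F ≥ 0`. Taking `F = η(A)` and `F = |Σ u_j η(A_j)|`, the expected
masses and the expected absolute sums of `ξ = X η` under `P` are those of `η` under `Q`, all scaled by
the same factor `c⁻¹`, and swap-invariance is blind to such a factor. -/

def SwapInvariant {Ω S : Type*} [MeasurableSpace Ω] [MeasurableSpace S]
    (P : Measure Ω) (μ : Measure S) (ξ : Ω → Measure S) : Prop :=
  ∀ (n : ℕ) (u : Fin n → ℝ) (A B : Fin n → Set S),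
    (∀ i, MeasurableSet (A i)) → (∀ i, MeasurableSet (B i)) →
    Pairwise (Function.onFun Disjoint A) → Pairwise (Function.onFun Disjoint B) →
    (∀ i, μ (A i) = μ (B i)) →
    (∀ i, ∫⁻ ω, ξ ω (A i) ∂P ≠ ⊤) → (∀ i, ∫⁻ ω, ξ ω (B i) ∂P ≠ ⊤) →
    ∫ ω, |∑ i, u i * (ξ ω (A i)).toReal| ∂P =
      ∫ ω, |∑ i, u i * (ξ ω (B i)).toReal| ∂P

namespace SwapInvariant

variable {Ω S : Type*} [MeasurableSpace Ω] [MeasurableSpace S]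

theorem of_eq_const_mul {P Q : Measure Ω} {μ : Measure S} {ξ η : Ω → Measure S}
    (hη : SwapInvariant Q μ η) (k : ℝ≥0∞)
    (hmass : ∀ s, MeasurableSet s → ∫⁻ ω, ξ ω s ∂P = k * ∫⁻ ω, η ω s ∂Q)
    (habs : ∀ (n : ℕ) (u : Fin n → ℝ) (A : Fin n → Set S), (∀ i, MeasurableSet (A i)) →
      ∫ ω, |∑ i, u i * (ξ ω (A i)).toReal| ∂P =
        k.toReal * ∫ ω, |∑ i, u i * (η ω (A i)).toReal| ∂Q) :
    SwapInvariant P μ ξ := by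
  intro n u A B hA hB hdA hdB hμAB hfA hfB
  rw [habs n u A hA, habs n u B hB]
  rcases eq_or_ne k 0 with rfl | hk
  · simp
  have hfin : ∀ s, MeasurableSet s → ∫⁻ ω, ξ ω s ∂P ≠ ⊤ → ∫⁻ ω, η ω s ∂Q ≠ ⊤ :=
    fun s hs hξ hη_top => hξ (by rw [hmass s hs, ENNReal.mul_eq_top]; exact Or.inl ⟨hk, hη_top⟩)
  rw [hη n u A B hA hB hdA hdB hμAB (fun i => hfin _ (hA i) (hfA i))
    (fun i => hfin _ (hB i) (hfB i))]

end SwapInvariant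

theorem ENNReal.ofReal_one_div_mul_mul_ofReal {x : ℝ} (hx : 0 < x) (c : ℝ) :
    ENNReal.ofReal (1 / (x * c)) * ENNReal.ofReal x = ENNReal.ofReal c⁻¹ := by
  rw [← ENNReal.ofReal_mul' hx.le, one_div, mul_inv, mul_comm x⁻¹, mul_assoc,
    inv_mul_cancel₀ hx.ne', mul_one]

section ChangeOfDensity

variable {Ω : Type*} [MeasurableSpace Ω] {Q : Measure Ω} {X : Ω → ℝ}

theorem lintegral_ofReal_mul_withDensity_one_div (hX : AEMeasurable X Q)
    (hXpos : ∀ᵐ ω ∂Q, 0 < X ω) (c : ℝ) (F : Ω → ℝ≥0∞) :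
    ∫⁻ ω, ENNReal.ofReal (X ω) * F ω ∂Q.withDensity (fun ω => ENNReal.ofReal (1 / (X ω * c))) =
      ENNReal.ofReal c⁻¹ * ∫⁻ ω, F ω ∂Q := by
  rw [lintegral_withDensity_eq_lintegral_mul_non_measurable₀ Q
      ((hX.mul_const c).const_div 1).ennreal_ofReal
      (Filter.Eventually.of_forall fun _ => ENNReal.ofReal_lt_top),
    ← lintegral_const_mul' _ _ ENNReal.ofReal_ne_top]
  refine lintegral_congr_ae ?_
  filter_upwards [hXpos] with ω hω
  rw [Pi.mul_apply, ← mul_assoc, ENNReal.ofReal_one_div_mul_mul_ofReal hω]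

theorem integral_mul_withDensity_one_div (hX : AEMeasurable X Q)
    (hXpos : ∀ᵐ ω ∂Q, 0 < X ω) (c : ℝ) {F : Ω → ℝ} (hF : AEStronglyMeasurable F Q)
    (hF_nonneg : 0 ≤ᵐ[Q] F) :
    ∫ ω, X ω * F ω ∂Q.withDensity (fun ω => ENNReal.ofReal (1 / (X ω * c))) =
      (ENNReal.ofReal c⁻¹).toReal * ∫ ω, F ω ∂Q := by
  have hPQ : Q.withDensity (fun ω => ENNReal.ofReal (1 / (X ω * c))) ≪ Q :=
    withDensity_absolutelyContinuous _ _
  have hXpos' : ∀ᵐ ω ∂Q.withDensity (fun ω => ENNReal.ofReal (1 / (X ω * c))), 0 < X ω :=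
    hPQ.ae_le hXpos
  rw [integral_eq_lintegral_of_nonneg_ae (f := fun ω => X ω * F ω)
      (by filter_upwards [hXpos', hPQ.ae_le hF_nonneg] with ω hx hf using mul_nonneg hx.le hf)
      ((hX.aestronglyMeasurable.mul hF).mono_ac hPQ),
    integral_eq_lintegral_of_nonneg_ae hF_nonneg hF, ← ENNReal.toReal_mul,
    ← lintegral_ofReal_mul_withDensity_one_div hX hXpos c]
  congr 1
  refine lintegral_congr_ae ?_
  filter_upwards [hXpos'] with ω hω
  exact ENNReal.ofReal_mul hω.le

end ChangeOfDensity

theorem MeasureTheory.Measure.abs_sum_mul_toReal_ofReal_smul_apply {S : Type*}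
    [MeasurableSpace S] {x : ℝ} (hx : 0 ≤ x) (m : Measure S) {n : ℕ} (u : Fin n → ℝ)
    (A : Fin n → Set S) :
    |∑ i, u i * ((ENNReal.ofReal x • m) (A i)).toReal| = x * |∑ i, u i * (m (A i)).toReal| := by
  simp only [Measure.smul_apply, smul_eq_mul, ENNReal.toReal_mul, ENNReal.toReal_ofReal hx,
    mul_left_comm (u _) x, ← Finset.mul_sum, abs_mul, abs_of_nonneg hx]

theorem stmt_7_general {Ω S : Type*} [MeasurableSpace Ω] [MeasurableSpace S]
    (Q : Measure Ω) (μ : Measure S)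
    (η : Ω → Measure S) (hη : Measurable η)
    (hsw : SwapInvariant Q μ η)
    (X : Ω → ℝ) (hX : Measurable X) (hXpos : ∀ᵐ ω ∂Q, 0 < X ω)
    (P : Measure Ω)
    (hP : P = Q.withDensity
      (fun ω => ENNReal.ofReal (1 / (X ω * ∫ ω', (X ω')⁻¹ ∂Q)))) :
    SwapInvariant P μ (fun ω => ENNReal.ofReal (X ω) • η ω) := by
  subst hP
  refine hsw.of_eq_const_mul (ENNReal.ofReal (∫ ω, (X ω)⁻¹ ∂Q)⁻¹)
    (fun s _ => ?_) (fun n u A hA => ?_)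
  · simp only [Measure.smul_apply, smul_eq_mul]
    exact lintegral_ofReal_mul_withDensity_one_div hX.aemeasurable hXpos _ _
  · have hmeas : AEStronglyMeasurable (fun ω => |∑ i, u i * (η ω (A i)).toReal|) Q :=
      (Finset.measurable_sum _ fun i _ => measurable_const.mul
        ((Measure.measurable_coe (hA i)).comp hη).ennreal_toReal).abs.aestronglyMeasurable
    rw [← integral_mul_withDensity_one_div hX.aemeasurable hXpos _ hmeas
      (Filter.Eventually.of_forall fun _ => abs_nonneg _)]
    refine integral_congr_ae ((withDensity_absolutelyContinuous _ _).ae_le ?_)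
    filter_upwards [hXpos] with ω hω
    exact Measure.abs_sum_mul_toReal_ofReal_smul_apply hω.le _ u A

/-- Scaling a `μ`-swap-invariant random measure by a positive random variable
`X` and simultaneously changing the probability measure with density
proportional to `1/X` yields a `μ`-swap-invariant random measure. -/
theorem stmt_7 {Ω S : Type*} [MeasurableSpace Ω] [MeasurableSpace S]
    (Q : Measure Ω) [IsProbabilityMeasure Q] (μ : Measure S)
    (η : Ω → Measure S) (hη : Measurable η)
    (hsw : SwapInvariant Q μ η)
    (X : Ω → ℝ) (hX : Measurable X) (hXpos : ∀ᵐ ω ∂Q, 0 < X ω)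
    (hXinv : Integrable (fun ω => (X ω)⁻¹) Q)
    (P : Measure Ω)
    (hP : P = Q.withDensity
      (fun ω => ENNReal.ofReal (1 / (X ω * ∫ ω', (X ω')⁻¹ ∂Q)))) :
    SwapInvariant P μ (fun ω => ENNReal.ofReal (X ω) • η ω) :=
  stmt_7_general Q μ η hη hsw X hX hXpos P hP
end

section
/- Let (S, 𝒮, μ) be a space with μ(S) finite, and ξ a random measure on S that is μ-swap-invariant under a probability measure P with E_P ξ(S) ∈ (0, ∞). Define Q by dQ/dP = ξ(S)/E_P ξ(S) and η = ξ/ξ(S) on {ξ(S) > 0}, η = 0 on {ξ(S) = 0}. Then η is μ-exchangeable under Q and ξ = ξ(S)·η holds. -/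
/-!
Adjoining the complement `(⋃ i, A i)ᶜ` to a disjoint family turns swap-invariance into the
equality of `E_P |∑ uᵢ ξ(Aᵢ) + t ξ(S)|` and `E_P |∑ uᵢ ξ(Bᵢ) + t ξ(S)|` for all `u`, `t`. Dividing
by `ξ(S)` is exactly the change of measure to `Q`, so `E_Q |∑ uᵢ η(Aᵢ) + t|` does not change when
the `Aᵢ` are replaced by the `Bᵢ`. For an integrable real random variable `Z`, the function
`t ↦ E |Z - t|` determines the law of `Z`: the ramps `(h + |x - s + h| - |x - s|) / 2h` tend to
`1_{x ≥ s}` as `h ↓ 0`. Hence all linear combinations `∑ uᵢ η(Aᵢ)` and `∑ uᵢ η(Bᵢ)` have the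
same laws under `Q`, and so, by Cramér–Wold, do the vectors `(η(Aᵢ))ᵢ` and `(η(Bᵢ))ᵢ`.
-/

open MeasureTheory
open scoped ENNReal

/-- `μ`-exchangeability of a random measure: equal finite-dimensional
distributions over disjoint families with equal `μ`-measures. -/
def ExchangeableRM {Ω S : Type*} [MeasurableSpace Ω] [MeasurableSpace S]
    (P : Measure Ω) (μ : Measure S) (ξ : Ω → Measure S) : Prop :=
  ∀ (n : ℕ) (A B : Fin n → Set S),
    (∀ i, MeasurableSet (A i)) → (∀ i, MeasurableSet (B i)) →
    Pairwise (Function.onFun Disjoint A) → Pairwise (Function.onFun Disjoint B) →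
    (∀ i, μ (A i) = μ (B i)) →
    P.map (fun ω => fun i => ξ ω (A i)) = P.map (fun ω => fun i => ξ ω (B i))

open Filter Topology Set

noncomputable def ramp (s h x : ℝ) : ℝ := (h + |x - (s - h)| - |x - s|) / (2 * h)

lemma ramp_mem_Icc {s h : ℝ} (hh : 0 < h) (x : ℝ) : ramp s h x ∈ Icc (0 : ℝ) 1 := by
  have h_diff := abs_le.1 ((abs_abs_sub_abs_le_abs_sub (x - (s - h)) (x - s)).trans_eq
    (by rw [sub_sub_sub_cancel_left, sub_sub_cancel, abs_of_pos hh]))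
  constructor
  · exact div_nonneg (by linarith) (by linarith)
  · rw [ramp, div_le_one (by linarith)]; linarith

lemma ramp_eq_one {s h x : ℝ} (hh : 0 < h) (hx : s ≤ x) : ramp s h x = 1 := by
  rw [ramp, abs_of_nonneg (by linarith), abs_of_nonneg (by linarith)]
  field_simp
  ring

lemma ramp_eq_zero {s h x : ℝ} (hh : 0 ≤ h) (hx : x ≤ s - h) : ramp s h x = 0 := by
  rw [ramp, abs_of_nonpos (by linarith), abs_of_nonpos (by linarith)]
  ring_nf

lemma tendsto_ramp (s x : ℝ) :
    Tendsto (fun h => ramp s h x) (𝓝[>] 0) (𝓝 ((Ici s).indicator 1 x)) := by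
  rcases le_or_gt s x with hx | hx
  · rw [indicator_of_mem (mem_Ici.2 hx)]
    exact tendsto_const_nhds.congr' <|
      eventually_nhdsWithin_of_forall fun h hh => (ramp_eq_one hh hx).symm
  · rw [indicator_of_notMem (notMem_Ici.2 hx)]
    refine tendsto_const_nhds.congr' ?_
    filter_upwards [Ioo_mem_nhdsGT (sub_pos.2 hx)] with h hh
    exact (ramp_eq_zero hh.1.le (by linarith [hh.2])).symm

lemma tendsto_integral_ramp (ν : Measure ℝ) [IsFiniteMeasure ν] (s : ℝ) :
    Tendsto (fun h => ∫ x, ramp s h x ∂ν) (𝓝[>] 0) (𝓝 (ν.real (Ici s))) := by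
  rw [← integral_indicator_one measurableSet_Ici]
  refine tendsto_integral_filter_of_dominated_convergence (fun _ => 1) ?_ ?_
    (integrable_const 1) (ae_of_all _ (tendsto_ramp s))
  · exact Eventually.of_forall fun h => Measurable.aestronglyMeasurable (by unfold ramp; fun_prop)
  · filter_upwards [self_mem_nhdsWithin] with h hh
    refine ae_of_all _ fun x => ?_
    have hx := ramp_mem_Icc (s := s) hh x
    exact abs_le.2 ⟨by linarith [hx.1], hx.2⟩

lemma integral_ramp {ν : Measure ℝ} [IsProbabilityMeasure ν] (hν : Integrable id ν) (s h : ℝ) :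
    ∫ x, ramp s h x ∂ν = (h + ∫ x, |x - (s - h)| ∂ν - ∫ x, |x - s| ∂ν) / (2 * h) := by
  have hint : ∀ c, Integrable (fun x => |x - c|) ν := fun c => (hν.sub (integrable_const c)).abs
  simp only [ramp]
  rw [integral_div, integral_sub (f := fun x => h + |x - (s - h)|)
    ((integrable_const h).add (hint _)) (hint _), integral_add (integrable_const h) (hint _),
    integral_const, probReal_univ, one_smul]

theorem MeasureTheory.Measure.ext_of_integral_abs_sub_eq {ν₁ ν₂ : Measure ℝ}
    [IsProbabilityMeasure ν₁] [IsProbabilityMeasure ν₂]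
    (h₁ : Integrable id ν₁) (h₂ : Integrable id ν₂)
    (h : ∀ t, ∫ x, |x - t| ∂ν₁ = ∫ x, |x - t| ∂ν₂) : ν₁ = ν₂ := by
  refine Measure.ext_of_Ici ν₁ ν₂ fun s => ?_
  have h_ramp : (fun h => ∫ x, ramp s h x ∂ν₁) = fun h => ∫ x, ramp s h x ∂ν₂ := by
    ext h'
    rw [integral_ramp h₁, integral_ramp h₂, h, h]
  have := tendsto_nhds_unique (tendsto_integral_ramp ν₁ s)
    (h_ramp ▸ tendsto_integral_ramp ν₂ s)
  rwa [measureReal_eq_measureReal_iff] at this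

theorem MeasureTheory.Measure.ext_of_map_strongDual_eq {E : Type*} [NormedAddCommGroup E]
    [NormedSpace ℝ E] [CompleteSpace E] [MeasurableSpace E] [BorelSpace E]
    [SecondCountableTopology E]
    {μ ν : Measure E} [IsFiniteMeasure μ] [IsFiniteMeasure ν]
    (h : ∀ L : StrongDual ℝ E, μ.map L = ν.map L) : μ = ν :=
  Measure.ext_of_charFunDual <| funext fun L => by
    rw [charFunDual_eq_charFun_map_one, h, ← charFunDual_eq_charFun_map_one]

theorem map_eq_of_integral_abs_sum_mul_add_eq {Ω ι : Type*} [MeasurableSpace Ω] [Fintype ι]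
    {Q : Measure Ω} [IsProbabilityMeasure Q] {X Y : Ω → ι → ℝ}
    (hX : Integrable X Q) (hY : Integrable Y Q)
    (h : ∀ (u : ι → ℝ) (t : ℝ),
      ∫ ω, |∑ i, u i * X ω i + t| ∂Q = ∫ ω, |∑ i, u i * Y ω i + t| ∂Q) :
    Q.map X = Q.map Y := by
  classical
  have : IsProbabilityMeasure (Q.map X) := Measure.isProbabilityMeasure_map hX.aemeasurable
  have : IsProbabilityMeasure (Q.map Y) := Measure.isProbabilityMeasure_map hY.aemeasurable
  refine Measure.ext_of_map_strongDual_eq fun L => ?_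
  have hL : ∀ x, L x = ∑ i, L (Pi.single i 1) * x i := fun x => by
    rw [← L.coe_coe, L.toLinearMap.pi_apply_eq_sum_univ x]
    refine Finset.sum_congr rfl fun i _ => ?_
    rw [smul_eq_mul, mul_comm]
    congr 2
    ext j
    simp [Pi.single_apply, eq_comm]
  have h_law : ∀ Z : Ω → ι → ℝ, Integrable Z Q →
      (Q.map Z).map L = Q.map (L ∘ Z) ∧ IsProbabilityMeasure (Q.map (L ∘ Z)) ∧
      Integrable id (Q.map (L ∘ Z)) ∧
      ∀ t, ∫ x, |x - t| ∂(Q.map (L ∘ Z)) = ∫ ω, |∑ i, L (Pi.single i 1) * Z ω i + -t| ∂Q := by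
    intro Z hZ
    have hLZ : Integrable (L ∘ Z) Q := L.integrable_comp hZ
    refine ⟨AEMeasurable.map_map_of_aemeasurable L.continuous.aemeasurable hZ.aemeasurable,
      Measure.isProbabilityMeasure_map hLZ.aemeasurable,
      (integrable_map_measure aestronglyMeasurable_id hLZ.aemeasurable).2 hLZ, fun t => ?_⟩
    rw [integral_map hLZ.aemeasurable (by fun_prop)]
    refine integral_congr_ae (ae_of_all _ fun ω => ?_)
    show |L (Z ω) - t| = _
    rw [hL (Z ω), sub_eq_add_neg]
  obtain ⟨hX₁, _, hX₂, hX₃⟩ := h_law X hX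
  obtain ⟨hY₁, _, hY₂, hY₃⟩ := h_law Y hY
  rw [hX₁, hY₁]
  exact Measure.ext_of_integral_abs_sub_eq hX₂ hY₂ fun t => by rw [hX₃, hY₃, h]

namespace MeasureTheory.Measure

variable {S : Type*} [MeasurableSpace S]

-- When `ν univ = 0` this is `⊤ • 0 = 0`, and when `ν univ = ⊤` it is `0 • ν = 0`.
noncomputable def normalize (ν : Measure S) : Measure S := (ν univ)⁻¹ • ν

lemma ite_eq_normalize (ν : Measure S) :
    (if ν univ = 0 then 0 else (ν univ)⁻¹ • ν) = ν.normalize := by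
  split_ifs with h
  · rw [normalize, measure_univ_eq_zero.1 h, smul_zero]
  · rfl

lemma normalize_apply_le_one (ν : Measure S) (s : Set S) : ν.normalize s ≤ 1 :=
  calc ν.normalize s = (ν univ)⁻¹ * ν s := rfl
    _ ≤ (ν univ)⁻¹ * ν univ := by gcongr; exact subset_univ s
    _ ≤ 1 := ENNReal.inv_mul_le_one _

lemma normalize_apply_ne_top (ν : Measure S) (s : Set S) : ν.normalize s ≠ ⊤ :=
  ((normalize_apply_le_one ν s).trans_lt ENNReal.one_lt_top).ne

lemma measure_univ_smul_normalize (ν : Measure S) [IsFiniteMeasure ν] :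
    ν univ • ν.normalize = ν := by
  by_cases h : ν univ = 0
  · rw [h, zero_smul, measure_univ_eq_zero.1 h]
  · rw [normalize, smul_smul, ENNReal.mul_inv_cancel h (measure_ne_top _ _), one_smul]

lemma measureReal_univ_mul_normalize_real (ν : Measure S) [IsFiniteMeasure ν] (s : Set S) :
    ν.real univ * ν.normalize.real s = ν.real s := by
  rw [measureReal_def, measureReal_def, measureReal_def, ← ENNReal.toReal_mul, ← smul_eq_mul,
    ← smul_apply, measure_univ_smul_normalize]

lemma measureReal_univ_mul_abs_sum_mul_normalize_real_add (ν : Measure S) [IsFiniteMeasure ν]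
    {ι : Type*} [Fintype ι] (A : ι → Set S) (u : ι → ℝ) (t : ℝ) :
    ν.real univ * |∑ i, u i * ν.normalize.real (A i) + t| =
      |∑ i, u i * ν.real (A i) + t * ν.real univ| := by
  calc ν.real univ * |∑ i, u i * ν.normalize.real (A i) + t|
      = |ν.real univ * (∑ i, u i * ν.normalize.real (A i) + t)| := by
        rw [abs_mul, abs_of_nonneg measureReal_nonneg]
    _ = |∑ i, u i * ν.real (A i) + t * ν.real univ| := by
        simp_rw [mul_add, Finset.mul_sum, mul_left_comm (ν.real univ),
          measureReal_univ_mul_normalize_real, mul_comm (ν.real univ)]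

end MeasureTheory.Measure

open Measure

lemma Measurable.normalize {Ω S : Type*} [MeasurableSpace Ω] [MeasurableSpace S]
    {ξ : Ω → Measure S} (hξ : Measurable ξ) : Measurable fun ω => (ξ ω).normalize :=
  measurable_of_measurable_coe _ fun _ hs =>
    ((measurable_coe MeasurableSet.univ).comp hξ).inv.mul ((measurable_coe hs).comp hξ)

section CompletePartition

variable {S : Type*} {n : ℕ}

def completePartition (A : Fin n → Set S) : Fin (n + 1) → Set S := Fin.snoc A (⋃ i, A i)ᶜ

@[simp] lemma completePartition_castSucc (A : Fin n → Set S) (i : Fin n) :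
    completePartition A i.castSucc = A i := Fin.snoc_castSucc ..

@[simp] lemma completePartition_last (A : Fin n → Set S) :
    completePartition A (Fin.last n) = (⋃ i, A i)ᶜ := Fin.snoc_last ..

lemma pairwise_disjoint_completePartition {A : Fin n → Set S}
    (hA : Pairwise (Function.onFun Disjoint A)) :
    Pairwise (Function.onFun Disjoint (completePartition A)) := by
  intro i j hij
  induction i using Fin.lastCases with
  | last =>
    induction j using Fin.lastCases with
    | last => exact absurd rfl hij
    | cast j => simpa [Function.onFun] using disjoint_compl_left.mono_right (subset_iUnion A j)
  | cast i =>
    induction j using Fin.lastCases with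
    | last => simpa [Function.onFun] using disjoint_compl_right.mono_left (subset_iUnion A i)
    | cast j => simpa [Function.onFun] using hA (Fin.castSucc_injective n |>.ne_iff.1 hij)

variable [MeasurableSpace S]

lemma measurableSet_completePartition {A : Fin n → Set S} (hA : ∀ i, MeasurableSet (A i))
    (i : Fin (n + 1)) : MeasurableSet (completePartition A i) := by
  induction i using Fin.lastCases with
  | last => simpa using (MeasurableSet.iUnion hA).compl
  | cast i => simpa using hA i

lemma measure_completePartition_eq {μ : Measure S} [IsFiniteMeasure μ] {A B : Fin n → Set S}
    (hA : ∀ i, MeasurableSet (A i)) (hB : ∀ i, MeasurableSet (B i))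
    (hdA : Pairwise (Function.onFun Disjoint A)) (hdB : Pairwise (Function.onFun Disjoint B))
    (hAB : ∀ i, μ (A i) = μ (B i)) (i : Fin (n + 1)) :
    μ (completePartition A i) = μ (completePartition B i) := by
  induction i using Fin.lastCases with
  | last =>
    simp only [completePartition_last,
      measure_compl (MeasurableSet.iUnion hA) (measure_ne_top _ _),
      measure_compl (MeasurableSet.iUnion hB) (measure_ne_top _ _),
      measure_iUnion hdA hA, measure_iUnion hdB hB, hAB]
  | cast i => simpa using hAB i

lemma sum_mul_measureReal_completePartition (ν : Measure S) [IsFiniteMeasure ν]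
    {A : Fin n → Set S} (hA : ∀ i, MeasurableSet (A i))
    (hdA : Pairwise (Function.onFun Disjoint A)) (u : Fin n → ℝ) (t : ℝ) :
    ∑ i, (Fin.snoc (fun j => u j + t) t : Fin (n + 1) → ℝ) i * ν.real (completePartition A i) =
      ∑ i, u i * ν.real (A i) + t * ν.real univ := by
  rw [Fin.sum_univ_castSucc, ← measureReal_add_measureReal_compl (MeasurableSet.iUnion hA),
    measureReal_iUnion_fintype hdA hA]
  simp only [Fin.snoc_castSucc, Fin.snoc_last, completePartition_castSucc, completePartition_last,
    add_mul, Finset.sum_add_distrib]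
  rw [mul_add, Finset.mul_sum]
  ring

end CompletePartition

section ChangeOfMeasure

variable {Ω : Type*} [MeasurableSpace Ω] {P : Measure Ω} {g : Ω → ℝ≥0∞}

lemma isProbabilityMeasure_withDensity_div_lintegral (hg : Measurable g)
    (h0 : ∫⁻ ω, g ω ∂P ≠ 0) (hfin : ∫⁻ ω, g ω ∂P ≠ ⊤) :
    IsProbabilityMeasure (P.withDensity fun ω => g ω / ∫⁻ ω', g ω' ∂P) := by
  constructor
  simp_rw [withDensity_apply _ MeasurableSet.univ, restrict_univ, div_eq_mul_inv]
  rw [lintegral_mul_const _ hg, ENNReal.mul_inv_cancel h0 hfin]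

lemma integral_withDensity_div_const (hg : Measurable g) (hg_fin : ∀ᵐ ω ∂P, g ω ≠ ⊤)
    {c : ℝ≥0∞} (hc : c ≠ 0) (f : Ω → ℝ) :
    ∫ ω, f ω ∂P.withDensity (fun ω => g ω / c) = c.toReal⁻¹ * ∫ ω, (g ω).toReal * f ω ∂P := by
  rw [integral_withDensity_eq_integral_toReal_smul (hg.div_const c)
    (hg_fin.mono fun ω h => ENNReal.div_lt_top h hc), ← integral_const_mul]
  refine integral_congr_ae (ae_of_all _ fun ω => ?_)
  dsimp only
  rw [ENNReal.toReal_div, smul_eq_mul]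
  ring

end ChangeOfMeasure

lemma map_eq_of_map_toReal_eq {Ω ι : Type*} [MeasurableSpace Ω] {Q : Measure Ω}
    {X Y : Ω → ι → ℝ≥0∞} (hX : Measurable X) (hY : Measurable Y)
    (hX_fin : ∀ ω i, X ω i ≠ ⊤) (hY_fin : ∀ ω i, Y ω i ≠ ⊤)
    (h : Q.map (fun ω i => (X ω i).toReal) = Q.map (fun ω i => (Y ω i).toReal)) :
    Q.map X = Q.map Y := by
  have h_ofReal : Measurable fun (v : ι → ℝ) i => ENNReal.ofReal (v i) := by fun_prop
  have h_recover : ∀ Z : Ω → ι → ℝ≥0∞, Measurable Z → (∀ ω i, Z ω i ≠ ⊤) →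
      Q.map Z = (Q.map fun ω i => (Z ω i).toReal).map fun v i => ENNReal.ofReal (v i) := by
    intro Z hZ hZ_fin
    rw [Measure.map_map h_ofReal (by fun_prop)]
    congr with ω i
    exact (ENNReal.ofReal_toReal (hZ_fin ω i)).symm
  rw [h_recover X hX hX_fin, h_recover Y hY hY_fin, h]

section RandomMeasure

variable {Ω S : Type*} [MeasurableSpace Ω] [MeasurableSpace S]
  {P : Measure Ω} {μ : Measure S} {ξ : Ω → Measure S}

lemma integrable_normalize_real {n : ℕ} [IsFiniteMeasure P] (hξ : Measurable ξ)
    {A : Fin n → Set S} (hA : ∀ i, MeasurableSet (A i)) :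
    Integrable (fun ω i => (ξ ω).normalize.real (A i)) P := by
  refine Integrable.of_bound (Measurable.aestronglyMeasurable ?_) 1 (ae_of_all _ fun ω => ?_)
  · exact measurable_pi_lambda _ fun i =>
      ((measurable_coe (hA i)).comp hξ.normalize).ennreal_toReal
  · refine (pi_norm_le_iff_of_nonneg zero_le_one).2 fun i => ?_
    rw [Real.norm_of_nonneg measureReal_nonneg]
    exact ENNReal.toReal_le_of_le_ofReal zero_le_one
      ((normalize_apply_le_one _ _).trans ENNReal.ofReal_one.ge)

theorem SwapInvariant.integral_abs_sum_mul_add_mul_univ_eq (hsw : SwapInvariant P μ ξ)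
    [IsFiniteMeasure μ] (hξ_fin : ∀ᵐ ω ∂P, ξ ω univ ≠ ⊤) (hfin : ∫⁻ ω, ξ ω univ ∂P ≠ ⊤)
    {n : ℕ} {A B : Fin n → Set S} (hA : ∀ i, MeasurableSet (A i))
    (hB : ∀ i, MeasurableSet (B i)) (hdA : Pairwise (Function.onFun Disjoint A))
    (hdB : Pairwise (Function.onFun Disjoint B)) (hAB : ∀ i, μ (A i) = μ (B i))
    (u : Fin n → ℝ) (t : ℝ) :
    ∫ ω, |∑ i, u i * (ξ ω).real (A i) + t * (ξ ω).real univ| ∂P =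
      ∫ ω, |∑ i, u i * (ξ ω).real (B i) + t * (ξ ω).real univ| ∂P := by
  have h_sum : ∀ C : Fin n → Set S, (∀ i, MeasurableSet (C i)) →
      Pairwise (Function.onFun Disjoint C) →
      (fun ω => |∑ i, (Fin.snoc (fun j => u j + t) t : Fin (n + 1) → ℝ) i *
        (ξ ω (completePartition C i)).toReal|) =ᵐ[P]
      fun ω => |∑ i, u i * (ξ ω).real (C i) + t * (ξ ω).real univ| := by
    intro C hC hdC
    filter_upwards [hξ_fin] with ω hω
    have : IsFiniteMeasure (ξ ω) := ⟨hω.lt_top⟩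
    rw [← sum_mul_measureReal_completePartition (ξ ω) hC hdC]
    rfl
  have h_lint : ∀ s, ∫⁻ ω, ξ ω s ∂P ≠ ⊤ := fun s =>
    ne_top_of_le_ne_top hfin (lintegral_mono fun ω => measure_mono (subset_univ s))
  rw [← integral_congr_ae (h_sum A hA hdA), ← integral_congr_ae (h_sum B hB hdB)]
  exact hsw (n + 1) _ _ _ (measurableSet_completePartition hA) (measurableSet_completePartition hB)
    (pairwise_disjoint_completePartition hdA) (pairwise_disjoint_completePartition hdB)
    (measure_completePartition_eq hA hB hdA hdB hAB) (fun _ => h_lint _) (fun _ => h_lint _)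

theorem SwapInvariant.exchangeableRM_normalize (hsw : SwapInvariant P μ ξ) [IsFiniteMeasure μ]
    (hξ : Measurable ξ)
    (h0 : ∫⁻ ω, ξ ω univ ∂P ≠ 0) (hfin : ∫⁻ ω, ξ ω univ ∂P ≠ ⊤) :
    ExchangeableRM (P.withDensity fun ω => ξ ω univ / ∫⁻ ω', ξ ω' univ ∂P) μ
      fun ω => (ξ ω).normalize := by
  set Q := P.withDensity fun ω => ξ ω univ / ∫⁻ ω', ξ ω' univ ∂P
  have h_mass : Measurable fun ω => ξ ω univ := (measurable_coe .univ).comp hξ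
  have hξ_fin : ∀ᵐ ω ∂P, ξ ω univ ≠ ⊤ := (ae_lt_top h_mass hfin).mono fun _ h => h.ne
  have : IsProbabilityMeasure Q := isProbabilityMeasure_withDensity_div_lintegral h_mass h0 hfin
  have h_change : ∀ {n : ℕ} (A : Fin n → Set S) (u : Fin n → ℝ) (t : ℝ),
      ∫ ω, |∑ i, u i * (ξ ω).normalize.real (A i) + t| ∂Q =
        (∫⁻ ω, ξ ω univ ∂P).toReal⁻¹ *
          ∫ ω, |∑ i, u i * (ξ ω).real (A i) + t * (ξ ω).real univ| ∂P := by
    intro n A u t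
    rw [integral_withDensity_div_const h_mass hξ_fin h0]
    refine congrArg _ (integral_congr_ae (hξ_fin.mono fun ω hω => ?_))
    have : IsFiniteMeasure (ξ ω) := ⟨hω.lt_top⟩
    exact measureReal_univ_mul_abs_sum_mul_normalize_real_add (ξ ω) A u t
  intro n A B hA hB hdA hdB hAB
  refine map_eq_of_map_toReal_eq
    (measurable_pi_lambda _ fun i => (measurable_coe (hA i)).comp hξ.normalize)
    (measurable_pi_lambda _ fun i => (measurable_coe (hB i)).comp hξ.normalize)
    (fun _ _ => normalize_apply_ne_top _ _) (fun _ _ => normalize_apply_ne_top _ _) ?_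
  refine map_eq_of_integral_abs_sum_mul_add_eq (integrable_normalize_real hξ hA)
    (integrable_normalize_real hξ hB) fun u t => ?_
  simp only [← measureReal_def]
  rw [h_change, h_change, hsw.integral_abs_sum_mul_add_mul_univ_eq hξ_fin hfin hA hB hdA hdB hAB]

end RandomMeasure

theorem stmt_8_general {Ω S : Type*} [MeasurableSpace Ω] [MeasurableSpace S]
    (P : Measure Ω) (μ : Measure S)
    (hμfin : μ Set.univ ≠ ⊤)
    (ξ : Ω → Measure S) (hξ : Measurable ξ)
    (hsw : SwapInvariant P μ ξ)
    (h0 : ∫⁻ ω, ξ ω Set.univ ∂P ≠ 0) (hfin : ∫⁻ ω, ξ ω Set.univ ∂P ≠ ⊤)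
    (Q : Measure Ω)
    (hQ : Q = P.withDensity (fun ω => ξ ω Set.univ / ∫⁻ ω', ξ ω' Set.univ ∂P))
    (η : Ω → Measure S)
    (hη : ∀ ω, η ω = if ξ ω Set.univ = 0 then 0 else (ξ ω Set.univ)⁻¹ • ξ ω) :
    ExchangeableRM Q μ η ∧ ∀ᵐ ω ∂P, (ξ ω Set.univ) • η ω = ξ ω := by
  have : IsFiniteMeasure μ := ⟨hμfin.lt_top⟩
  obtain rfl : η = fun ω => (ξ ω).normalize := funext fun ω => (hη ω).trans (ite_eq_normalize _)
  subst hQ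
  refine ⟨hsw.exchangeableRM_normalize hξ h0 hfin, ?_⟩
  filter_upwards [ae_lt_top ((measurable_coe .univ).comp hξ) hfin] with ω hω
  have : IsFiniteMeasure (ξ ω) := ⟨hω⟩
  exact measure_univ_smul_normalize (ξ ω)

/-- A swap-invariant random measure on a space of finite measure equals its
total mass times a random measure that is exchangeable after a change of
probability measure with density `ξ(S)/E ξ(S)`. -/
theorem stmt_8 {Ω S : Type*} [MeasurableSpace Ω] [MeasurableSpace S]
    (P : Measure Ω) [IsProbabilityMeasure P] (μ : Measure S)
    (hμfin : μ Set.univ ≠ ⊤)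
    (ξ : Ω → Measure S) (hξ : Measurable ξ)
    (hsw : SwapInvariant P μ ξ)
    (h0 : ∫⁻ ω, ξ ω Set.univ ∂P ≠ 0) (hfin : ∫⁻ ω, ξ ω Set.univ ∂P ≠ ⊤)
    (Q : Measure Ω)
    (hQ : Q = P.withDensity (fun ω => ξ ω Set.univ / ∫⁻ ω', ξ ω' Set.univ ∂P))
    (η : Ω → Measure S)
    (hη : ∀ ω, η ω = if ξ ω Set.univ = 0 then 0 else (ξ ω Set.univ)⁻¹ • ξ ω) :
    ExchangeableRM Q μ η ∧ ∀ᵐ ω ∂P, (ξ ω Set.univ) • η ω = ξ ω :=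
  stmt_8_general P μ hμfin ξ hξ hsw h0 hfin Q hQ η hη
end

section
/- Let ξ be a swap-invariant random vector in ℝⁿ whose coordinates take only the two values a and b with |a| ≠ |b|. Then ξ is exchangeable. -/
/-!
Write `ξ = V ∘ σ`, where `σ` is the random set of coordinates equal to `a`, encoded in
`Fin n → Bool`, and `V s` has entry `a` on `s` and `b` off it. Swap-invariance says that
`q := law (σ ∘ π) - law σ` satisfies `∑ s, q s * |⟪u, V s⟫| = 0` for every `u`. Along a line
`u = w + t d`, each term is a multiple of `|t - r_s|`, and the kink of the sum at `r_s` has size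
proportional to the total weight of the terms with that root. A generic `w` separates the root of
`V s` from all others unless some `V s'` is a multiple of `V s`; when `|a| ≠ |b|` this happens only
for constant `s`, which `π` fixes anyway. Hence `law (σ ∘ π) = law σ`.
-/

open MeasureTheory Filter Topology

theorem abs_add_add_abs_sub_of_abs_le {x h : ℝ} (hh : |h| ≤ |x|) :
    |x + h| + |x - h| = 2 * |x| := by
  rcases le_total 0 x with hx | hx
  · rw [abs_of_nonneg hx, abs_le] at *
    rw [abs_of_nonneg (by linarith), abs_of_nonneg (by linarith)]
    ring
  · rw [abs_of_nonpos hx, abs_le] at *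
    rw [abs_of_nonpos (by linarith), abs_of_nonpos (by linarith)]
    ring

theorem exists_pos_forall_abs_mul_le {ι : Type*} [Finite ι] (x b : ι → ℝ) :
    ∃ ε > 0, ∀ i, x i ≠ 0 → |ε * b i| ≤ |x i| := by
  refine (eventually_mem_nhdsWithin.and (eventually_all.2 fun i => ?_)).exists
    (f := 𝓝[>] (0 : ℝ))
  by_cases hxi : x i = 0
  · simp [hxi]
  have hlim : Tendsto (fun ε : ℝ => |ε * b i|) (𝓝[>] 0) (𝓝 0) := by
    refine tendsto_nhdsWithin_of_tendsto_nhds ?_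
    simpa using ((continuous_id.mul continuous_const).abs.tendsto (0 : ℝ) : _)
  filter_upwards [hlim.eventually (ge_mem_nhds (abs_pos.2 hxi))] with ε hε _ using hε

theorem eq_zero_of_forall_sum_mul_abs_add_mul_eq {ι : Type*} [Fintype ι] (q a b : ι → ℝ) (C : ℝ)
    (h : ∀ t, ∑ i, q i * |a i + t * b i| = C) {i₀ : ι} (hb₀ : b i₀ ≠ 0)
    (hsep : ∀ i ≠ i₀, b i ≠ 0 → a i * b i₀ ≠ a i₀ * b i) : q i₀ = 0 := by
  set t₀ := -a i₀ / b i₀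
  set x : ι → ℝ := fun i => a i + t₀ * b i
  have hx_mul : ∀ i, x i * b i₀ = a i * b i₀ - a i₀ * b i := fun i => by
    simp only [x, t₀]; field_simp; ring
  have hx₀ : x i₀ = 0 := by
    simpa [hb₀] using hx_mul i₀
  have hx : ∀ i ≠ i₀, b i ≠ 0 → x i ≠ 0 := fun i hi hbi hxi =>
    hsep i hi hbi (sub_eq_zero.1 (by rw [← hx_mul, hxi, zero_mul]))
  obtain ⟨ε, hε, hεx⟩ := exists_pos_forall_abs_mul_le x b
  -- The second difference at `t₀` of the sum is zero, and only the term `i₀` has a kink there.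
  have hterm : ∀ i ≠ i₀, q i * (|x i + ε * b i| + |x i - ε * b i| - 2 * |x i|) = 0 := by
    intro i hi
    by_cases hbi : b i = 0
    · rw [hbi, mul_zero, add_zero, sub_zero]; ring
    · rw [abs_add_add_abs_sub_of_abs_le (hεx i (hx i hi hbi)), sub_self, mul_zero]
  have hsum : ∑ i, q i * (|x i + ε * b i| + |x i - ε * b i| - 2 * |x i|) = 0 := by
    have hshift : ∀ s, ∑ i, q i * |x i + s * b i| = C := fun s => by
      rw [← h (t₀ + s)]
      exact Finset.sum_congr rfl fun i _ => by simp only [x]; ring_nf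
    have hsub := hshift (-ε)
    have hzero := hshift 0
    simp only [zero_mul, add_zero, neg_mul, ← sub_eq_add_neg] at hsub hzero
    simp only [mul_sub, mul_add, Finset.sum_add_distrib, Finset.sum_sub_distrib,
      mul_left_comm _ (2 : ℝ), ← Finset.mul_sum, hshift, hsub, hzero]
    ring
  rw [Finset.sum_eq_single i₀ (fun i _ hi => hterm i hi) (by simp), hx₀] at hsum
  have : q i₀ * (2 * (ε * |b i₀|)) = 0 := by
    rw [← hsum, zero_add, zero_sub, abs_neg, abs_mul, abs_of_pos hε, abs_zero]; ring
  exact (mul_eq_zero.1 this).resolve_right (by positivity)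

theorem eq_zero_of_forall_dual_sum_mul_abs_eq_zero {ι M : Type*} [Fintype ι] [AddCommGroup M]
    [Module ℝ M] (v : ι → M) (q : ι → ℝ) (h : ∀ f : Module.Dual ℝ M, ∑ i, q i * |f (v i)| = 0)
    {i₀ : ι} (hv₀ : v i₀ ≠ 0) (hsep : ∀ i ≠ i₀, ∀ c : ℝ, v i = c • v i₀ → v i = 0) :
    q i₀ = 0 := by
  obtain ⟨d, hd⟩ : ∃ d : Module.Dual ℝ M, d (v i₀) ≠ 0 := by
    by_contra! hd
    exact hv₀ ((Module.forall_dual_apply_eq_zero_iff ℝ _).1 hd)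
  -- Along `t ↦ w + t • d`, the root of the `i₀`-th term differs from the roots of all others.
  obtain ⟨w, hw⟩ := Module.exists_dual_forall_apply_ne_zero (K := ℝ)
    (fun i : {i // i ≠ i₀ ∧ d (v i) ≠ 0} => d (v i₀) • v i - d (v i) • v i₀)
    (fun ⟨i, hi, hdi⟩ hzero => hdi <| by
      have hvi : v i = (d (v i) / d (v i₀)) • v i₀ := by
        rw [div_eq_inv_mul, mul_smul, ← sub_eq_zero.1 hzero, smul_smul, inv_mul_cancel₀ hd,
          one_smul]
      rw [hsep i hi _ hvi, map_zero])
  refine eq_zero_of_forall_sum_mul_abs_add_mul_eq q (fun i => w (v i)) (fun i => d (v i)) 0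
    (fun t => by simpa using h (w + t • d)) hd fun i hi hdi hcross => hw ⟨i, hi, hdi⟩ ?_
  simp only [map_sub, map_smul, smul_eq_mul]
  linarith

def condVec {ι : Type*} (a b : ℝ) (s : ι → Bool) : ι → ℝ := fun j => cond (s j) a b

theorem condVec_injective {ι : Type*} {a b : ℝ} (hab : a ≠ b) :
    Function.Injective (condVec (ι := ι) a b) := by
  intro s t hst
  funext j
  have := congrFun hst j
  cases hs : s j <;> cases ht : t j <;> simp_all [condVec]

theorem eq_zero_or_eq_one_of_mul_mem_pair {a b c : ℝ} (hab : |a| ≠ |b|)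
    (hca : c * a = a ∨ c * a = b) (hcb : c * b = a ∨ c * b = b) : c = 0 ∨ c = 1 := by
  have hab' : a - b ≠ 0 := sub_ne_zero.2 fun h => hab (h ▸ rfl)
  rcases hca with hca | hca <;> rcases hcb with hcb | hcb
  · exact .inl ((mul_eq_zero.1 (by linarith : c * (a - b) = 0)).resolve_right hab')
  · right
    by_contra hc
    have hc' : c - 1 ≠ 0 := sub_ne_zero.2 hc
    have ha : a = 0 := (mul_eq_zero.1 (by linarith : (c - 1) * a = 0)).resolve_left hc'
    have hb : b = 0 := (mul_eq_zero.1 (by linarith : (c - 1) * b = 0)).resolve_left hc'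
    exact hab (by rw [ha, hb])
  · exfalso
    have ha : a ≠ 0 := fun ha => hab (by rw [ha, ← hca, ha, mul_zero])
    have hc2 : (c - 1) * (c + 1) = 0 := by
      apply (mul_eq_zero.1 _).resolve_right ha
      linear_combination c * hca + hcb
    rcases mul_eq_zero.1 hc2 with hc | hc
    · exact hab' (by linear_combination hca - a * hc)
    · exact hab (by rw [← hca, show c = -1 by linarith]; simp)
  · exact .inl ((mul_eq_zero.1 (by linarith : c * (a - b) = 0)).resolve_right hab')

theorem condVec_eq_zero_of_eq_smul {ι : Type*} {a b c : ℝ} (hab : |a| ≠ |b|) {s t : ι → Bool}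
    {j₁ j₂ : ι} (hj₁ : s j₁ = true) (hj₂ : s j₂ = false) (hts : t ≠ s)
    (h : condVec a b t = c • condVec a b s) : condVec a b t = 0 := by
  have hmem : ∀ j, c * condVec a b s j = a ∨ c * condVec a b s j = b := fun j => by
    rw [← smul_eq_mul, ← Pi.smul_apply, ← h, condVec]
    cases t j <;> simp
  have hc := eq_zero_or_eq_one_of_mul_mem_pair hab
    (by simpa [condVec, hj₁] using hmem j₁) (by simpa [condVec, hj₂] using hmem j₂)
  rcases hc with rfl | rfl
  · rw [h, zero_smul]
  · exact absurd (condVec_injective (fun h' => hab (by rw [h'])) (h.trans (one_smul _ _))) hts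

theorem condVec_ne_zero {ι : Type*} {a b : ℝ} (hab : a ≠ b) {s : ι → Bool} {j₁ j₂ : ι}
    (hj₁ : s j₁ = true) (hj₂ : s j₂ = false) : condVec a b s ≠ 0 := by
  intro h
  have h₁ := congrFun h j₁
  have h₂ := congrFun h j₂
  simp only [condVec, hj₁, hj₂, cond_true, cond_false, Pi.zero_apply] at h₁ h₂
  exact hab (h₁.trans h₂.symm)

theorem Module.Dual.exists_eq_dotProduct {ι : Type*} [Fintype ι] (f : Module.Dual ℝ (ι → ℝ)) :
    ∃ u : ι → ℝ, ∀ x, f x = u ⬝ᵥ x := by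
  classical
  refine ⟨fun i => f (Pi.single i 1), fun x => ?_⟩
  rw [LinearMap.pi_apply_eq_sum_univ f x, dotProduct]
  refine Finset.sum_congr rfl fun i _ => ?_
  rw [smul_eq_mul, mul_comm]
  congr 2
  funext j
  simp [Pi.single_apply, eq_comm]

theorem integral_comp_eq_sum_measureReal_map {Ω α : Type*} [MeasurableSpace Ω] [Fintype α]
    [MeasurableSpace α] [MeasurableSingletonClass α] {P : Measure Ω} [IsFiniteMeasure P]
    {σ : Ω → α} (hσ : Measurable σ) (F : α → ℝ) :
    ∫ ω, F (σ ω) ∂P = ∑ s, (P.map σ).real {s} * F s := by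
  rw [← integral_map hσ.aemeasurable Measurable.of_discrete.aestronglyMeasurable,
    integral_fintype .of_finite]
  rfl

theorem exists_measurable_eq_condVec {Ω ι : Type*} [MeasurableSpace Ω] [Fintype ι]
    {ξ : Ω → ι → ℝ} (hξ : Measurable ξ) {a b : ℝ} (hab : a ≠ b)
    (hval : ∀ ω j, ξ ω j = a ∨ ξ ω j = b) :
    ∃ σ : Ω → ι → Bool, Measurable σ ∧ ξ = fun ω => condVec a b (σ ω) := by
  classical
  have hξσ : ξ = fun ω => condVec a b fun j => decide (ξ ω j = a) := by
    funext ω j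
    rcases hval ω j with h | h <;> simp [condVec, h, hab.symm]
  refine ⟨fun ω j => decide (ξ ω j = a), measurable_to_countable' fun s => ?_, hξσ⟩
  convert hξ (measurableSet_singleton (condVec a b s)) using 1
  ext ω
  conv_rhs => rw [Set.mem_preimage, hξσ]
  exact (condVec_injective hab).eq_iff.symm

theorem map_comp_perm_eq_of_integral_abs_dotProduct_eq {Ω ι : Type*} [MeasurableSpace Ω]
    {P : Measure Ω} [IsFiniteMeasure P] [Fintype ι] {σ : Ω → ι → Bool} (hσ : Measurable σ)
    {a b : ℝ} (hab : |a| ≠ |b|) (π : Equiv.Perm ι)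
    (h : ∀ u : ι → ℝ,
      ∫ ω, |u ⬝ᵥ condVec a b (σ ω ∘ π)| ∂P = ∫ ω, |u ⬝ᵥ condVec a b (σ ω)| ∂P) :
    P.map (fun ω => σ ω ∘ π) = P.map σ := by
  classical
  have hσπ : Measurable fun ω => σ ω ∘ π :=
    measurable_pi_lambda _ fun j => (measurable_pi_apply (π j)).comp hσ
  refine Measure.ext_iff_singleton.2 fun t => ?_
  by_cases ht : ∃ j₁ j₂, t j₁ = true ∧ t j₂ = false
  · obtain ⟨j₁, j₂, hj₁, hj₂⟩ := ht
    have hab' : a ≠ b := fun h' => hab (by rw [h'])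
    rw [← measureReal_eq_measureReal_iff, ← sub_eq_zero]
    refine eq_zero_of_forall_dual_sum_mul_abs_eq_zero (condVec a b)
      (fun s => (P.map fun ω => σ ω ∘ π).real {s} - (P.map σ).real {s}) (fun f => ?_)
      (condVec_ne_zero hab' hj₁ hj₂) fun s hst c hc => condVec_eq_zero_of_eq_smul hab hj₁ hj₂ hst hc
    obtain ⟨u, hu⟩ := f.exists_eq_dotProduct
    simp only [hu, sub_mul, Finset.sum_sub_distrib]
    rw [← integral_comp_eq_sum_measureReal_map hσπ (fun s => |u ⬝ᵥ condVec a b s|),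
      ← integral_comp_eq_sum_measureReal_map hσ (fun s => |u ⬝ᵥ condVec a b s|), h, sub_self]
  · have htπ : t ∘ π = t := by
      simp only [not_exists, not_and, Bool.not_eq_false] at ht
      funext j
      exact Bool.eq_iff_iff.2 ⟨ht _ _, ht _ _⟩
    rw [Measure.map_apply hσπ (measurableSet_singleton t),
      Measure.map_apply hσ (measurableSet_singleton t)]
    congr 1
    ext ω
    conv_lhs => rw [Set.mem_preimage, Set.mem_singleton_iff, ← htπ]
    exact π.surjective.injective_comp_right.eq_iff

theorem stmt_13_general {Ω : Type*} [MeasurableSpace Ω] (P : Measure Ω)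
    [IsProbabilityMeasure P] (n : ℕ) (ξ : Ω → Fin n → ℝ)
    (hmeas : Measurable ξ)
    (a b : ℝ) (hab : |a| ≠ |b|)
    (hval : ∀ ω j, ξ ω j = a ∨ ξ ω j = b)
    (hswap : ∀ (u : Fin n → ℝ) (π : Equiv.Perm (Fin n)),
      ∫ ω, |∑ j, u j * ξ ω (π j)| ∂P = ∫ ω, |∑ j, u j * ξ ω j| ∂P) :
    ∀ π : Equiv.Perm (Fin n),
      P.map (fun ω => fun j => ξ ω (π j)) = P.map ξ := by
  intro π
  obtain ⟨σ, hσ, rfl⟩ := exists_measurable_eq_condVec hmeas (fun h => hab (by rw [h])) hval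
  have hlaw := map_comp_perm_eq_of_integral_abs_dotProduct_eq hσ hab π fun u => hswap u π
  have hV : Measurable (condVec (ι := Fin n) a b) := .of_discrete
  have hσπ : Measurable fun ω => σ ω ∘ π :=
    measurable_pi_lambda _ fun j => (measurable_pi_apply (π j)).comp hσ
  have := congrArg (Measure.map (condVec a b)) hlaw
  rw [Measure.map_map hV hσπ, Measure.map_map hV hσ] at this
  exact this

/-- A swap-invariant random vector whose coordinates take only two values `a`
and `b` with `|a| ≠ |b|` is exchangeable. -/
theorem stmt_13 {Ω : Type*} [MeasurableSpace Ω] (P : Measure Ω)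
    [IsProbabilityMeasure P] (n : ℕ) (ξ : Ω → Fin n → ℝ)
    (hmeas : Measurable ξ) (hint : ∀ j, Integrable (fun ω => ξ ω j) P)
    (a b : ℝ) (hab : |a| ≠ |b|)
    (hval : ∀ ω j, ξ ω j = a ∨ ξ ω j = b)
    (hswap : ∀ (u : Fin n → ℝ) (π : Equiv.Perm (Fin n)),
      ∫ ω, |∑ j, u j * ξ ω (π j)| ∂P = ∫ ω, |∑ j, u j * ξ ω j| ∂P) :
    ∀ π : Equiv.Perm (Fin n),
      P.map (fun ω => fun j => ξ ω (π j)) = P.map ξ :=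
  stmt_13_general P n ξ hmeas a b hab hval hswap
end
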